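/- arXiv:2112.03617 — 8 statements merged into one kernel-verified Lean document; each statement's English description precedes it below -/
import Mathlib

section
/- If n = c^3 + d^3 = c_1^3 + d_1^3 with c, d, c_1, d_1 > 0, gcd(c,d) = 1, gcd(d,n) = 1, gcd(c_1,d_1)=1, gcd(d_1,n)=1, and c·d^{-1} ≡ c_1·d_1^{-1} (mod n), then c = c_1 and d = d_1. -/
theorem cube_prod_lt {n a b : ℕ} (h2 : 2 ≤ n) (ha : a ^ 3 < n) (hb : b ^ 3 < n) :
    a * b < n := by
  by_contra h
  push_neg at h
  have h3 : n ^ 3 ≤ (a * b) ^ 3 := Nat.pow_le_pow_left h 3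
  have h4 : (a * b) ^ 3 = a ^ 3 * b ^ 3 := by ring
  have h5 : a ^ 3 * b ^ 3 < n * n := Nat.mul_lt_mul'' ha hb
  nlinarith

/-- If `n = c^3 + d^3 = c₁^3 + d₁^3` with positive `c, d, c₁, d₁`, with
`gcd(c,d) = gcd(d,n) = gcd(c₁,d₁) = gcd(d₁,n) = 1`, and
`c·d⁻¹ ≡ c₁·d₁⁻¹ (mod n)`, then `c = c₁` and `d = d₁`. -/
theorem sum_two_cubes_unique_root (n c d c₁ d₁ : ℕ)
    (hc : 0 < c) (hd : 0 < d) (hc₁ : 0 < c₁) (hd₁ : 0 < d₁)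
    (hn : n = c ^ 3 + d ^ 3) (hn₁ : n = c₁ ^ 3 + d₁ ^ 3)
    (hcd : Nat.gcd c d = 1) (hdn : Nat.gcd d n = 1)
    (hcd₁ : Nat.gcd c₁ d₁ = 1) (hdn₁ : Nat.gcd d₁ n = 1)
    (hcong : (c : ZMod n) * (d : ZMod n)⁻¹ = (c₁ : ZMod n) * (d₁ : ZMod n)⁻¹) :
    c = c₁ ∧ d = d₁ := by
  have h2 : 2 ≤ n := by nlinarith [pow_pos hc 3, pow_pos hd 3]
  have hdu : (d : ZMod n) * (d : ZMod n)⁻¹ = 1 := ZMod.coe_mul_inv_eq_one d hdn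
  have hdu₁ : (d₁ : ZMod n) * (d₁ : ZMod n)⁻¹ = 1 := ZMod.coe_mul_inv_eq_one d₁ hdn₁
  have key : ((c * d₁ : ℕ) : ZMod n) = ((c₁ * d : ℕ) : ZMod n) := by
    push_cast
    linear_combination ((d : ZMod n) * d₁) * hcong - ((c : ZMod n) * d₁) * hdu
      + ((c₁ : ZMod n) * d) * hdu₁
  have hmod : c * d₁ ≡ c₁ * d [MOD n] := (ZMod.natCast_eq_natCast_iff _ _ _).1 key
  have hcn : c ^ 3 < n := by have := pow_pos hd 3; omega
  have hdn' : d ^ 3 < n := by have := pow_pos hc 3; omega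
  have hcn₁ : c₁ ^ 3 < n := by have := pow_pos hd₁ 3; omega
  have hdn₁' : d₁ ^ 3 < n := by have := pow_pos hc₁ 3; omega
  have hlt1 : c * d₁ < n := cube_prod_lt h2 hcn hdn₁'
  have hlt2 : c₁ * d < n := cube_prod_lt h2 hcn₁ hdn'
  have heq : c * d₁ = c₁ * d := Nat.ModEq.eq_of_lt_of_lt hmod hlt1 hlt2
  have hcc : c = c₁ := by
    have h1 : c ∣ c₁ * d := ⟨d₁, by linarith⟩
    have h2' : c₁ ∣ c * d₁ := ⟨d, by linarith⟩
    exact Nat.dvd_antisymm (Nat.Coprime.dvd_of_dvd_mul_right hcd h1)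
      (Nat.Coprime.dvd_of_dvd_mul_right hcd₁ h2')
  subst hcc
  exact ⟨rfl, (Nat.eq_of_mul_eq_mul_left hc (by linarith)).symm⟩
end

section
/- For every square-free positive integer n and every integer k ≥ 2, there exists a divisor d of n with d ≤ n^{1/k} and τ(n) ≤ 2^k · τ(d)^k, where τ is the number-of-divisors function. -/
/-!
Let `r` be the number of prime factors of `n` and let `d` be the product of the `⌊r/k⌋` smallest
ones. The first `k⌊r/k⌋` prime factors fall into `k` consecutive blocks of `⌊r/k⌋` primes, each
with product at least `d`, so `d^k ≤ n`. Since `n` and `d` are squarefree,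
`τ(n) = 2^r ≤ 2^(k + k⌊r/k⌋) = 2^k τ(d)^k`.
-/

open Finset

namespace List

variable {M : Type*} [Monoid M] [Preorder M] [MulLeftMono M] [MulRightMono M] {L : List M}

theorem SortedLE.prod_take_le_prod_take_drop (hL : L.SortedLE) {j m : ℕ}
    (h : j + m ≤ L.length) : (L.take m).prod ≤ ((L.drop j).take m).prod := by
  have hlen : (L.take m).length = ((L.drop j).take m).length := by
    simp only [length_take, length_drop]; omega
  refine Forall₂.prod_le_prod' (forall₂_iff_get.2 ⟨hlen, fun i h₁ _ => ?_⟩)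
  simp only [get_eq_getElem, getElem_take, getElem_drop]
  exact hL.getElem_le_getElem_of_le (by simp only [length_take, lt_inf_iff] at h₁; omega)

theorem SortedLE.prod_take_pow_le_prod_take (hL : L.SortedLE) {m k : ℕ}
    (h : k * m ≤ L.length) : (L.take m).prod ^ k ≤ (L.take (k * m)).prod := by
  induction k with
  | zero => simp
  | succ k ih =>
    have hkm : k * m + m ≤ L.length := by simpa [add_mul] using h
    calc (L.take m).prod ^ (k + 1)
        = (L.take m).prod ^ k * (L.take m).prod := pow_succ _ _
      _ ≤ (L.take (k * m)).prod * ((L.drop (k * m)).take m).prod :=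
          mul_le_mul' (ih (by omega)) (hL.prod_take_le_prod_take_drop hkm)
      _ = (L.take ((k + 1) * m)).prod := by rw [add_one_mul, take_add, prod_append]

end List

namespace Nat

theorem card_divisors_of_squarefree {n : ℕ} (hn : Squarefree n) :
    #n.divisors = 2 ^ n.primeFactorsList.length := by
  rw [card_divisors hn.ne_zero, ← List.toFinset_card_of_nodup
      ((squarefree_iff_nodup_primeFactorsList hn.ne_zero).1 hn), toFinset_factors,
    ← prod_const]
  refine prod_congr rfl fun p hp => ?_
  rw [factorization_eq_one_of_squarefree hn (prime_of_mem_primeFactors hp)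
    (dvd_of_mem_primeFactors hp)]

theorem card_divisors_prod_of_nodup {l : List ℕ} (hl : l.Nodup) (hp : ∀ p ∈ l, p.Prime) :
    #l.prod.divisors = 2 ^ l.length := by
  have hperm : l.Perm l.prod.primeFactorsList := primeFactorsList_unique rfl hp
  have hne : l.prod ≠ 0 := List.prod_ne_zero fun h => not_prime_zero (hp 0 h)
  have hsq : Squarefree l.prod :=
    (squarefree_iff_nodup_primeFactorsList hne).2 (hperm.nodup_iff.1 hl)
  rw [card_divisors_of_squarefree hsq, hperm.length_eq]

end Nat

theorem divisor_bound_squarefree_general (n : ℕ) (hsq : Squarefree n)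
    (k : ℕ) (hk : 2 ≤ k) :
    ∃ d : ℕ, d ∣ n ∧ (d : ℝ) ≤ (n : ℝ) ^ ((1 : ℝ) / k) ∧
      n.divisors.card ≤ 2 ^ k * d.divisors.card ^ k := by
  set L := n.primeFactorsList
  set m := L.length / k
  have hn : n ≠ 0 := hsq.ne_zero
  have hL : L.prod = n := Nat.prod_primeFactorsList hn
  have hnodup : L.Nodup := (Nat.squarefree_iff_nodup_primeFactorsList hn).1 hsq
  have hprime : ∀ p ∈ L, p.Prime := fun p => Nat.prime_of_mem_primeFactorsList
  have hkm : k * m ≤ L.length := Nat.mul_div_le _ _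
  have hdvd (j : ℕ) : (L.take j).prod ∣ n := (L.take_sublist j).prod_dvd_prod.trans hL.dvd
  have hdk : (L.take m).prod ^ k ≤ n :=
    (n.primeFactorsList_sorted.prod_take_pow_le_prod_take hkm).trans <|
      Nat.le_of_dvd (Nat.pos_of_ne_zero hn) (hdvd _)
  have hlen : L.length ≤ k + m * k := by
    have : L.length < k * (m + 1) := Nat.lt_mul_div_succ _ (by omega)
    linarith
  refine ⟨(L.take m).prod, hdvd m, ?_, ?_⟩
  · rw [one_div, Real.le_rpow_inv_iff_of_pos (by positivity) (by positivity) (by positivity),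
      Real.rpow_natCast]
    exact_mod_cast hdk
  · rw [← hL, Nat.card_divisors_prod_of_nodup hnodup hprime,
      Nat.card_divisors_prod_of_nodup (hnodup.sublist (L.take_sublist m))
        fun p hp => hprime p ((L.take_sublist m).mem hp),
      List.length_take_of_le (Nat.div_le_self _ _), ← pow_mul, ← pow_add]
    exact Nat.pow_le_pow_right two_pos hlen

/-- For every square-free `n` and `k ≥ 2` there is a divisor `d ∣ n` with
`d ≤ n^(1/k)` and `τ(n) ≤ 2^k · τ(d)^k`. -/
theorem divisor_bound_squarefree (n : ℕ) (hn : 0 < n) (hsq : Squarefree n)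
    (k : ℕ) (hk : 2 ≤ k) :
    ∃ d : ℕ, d ∣ n ∧ (d : ℝ) ≤ (n : ℝ) ^ ((1 : ℝ) / k) ∧
      n.divisors.card ≤ 2 ^ k * d.divisors.card ^ k :=
  divisor_bound_squarefree_general n hsq k hk
end

section
/- For every positive integer n and every integer k ≥ 2, there exists a divisor d of n with d ≤ n^{1/k} and τ(n) ≤ 2^{k^2} · τ(d)^{k^3}. -/
/-!
Write `n = ∏ p ^ e_p` with `r` distinct primes. Two divisors compete. The `k`-th floor root
`d₀ = ∏ p ^ ⌊e_p / k⌋` satisfies `d₀ ^ k ∣ n` and `τ(n) = ∏ (e_p + 1) ≤ k ^ r τ(d₀)`. The product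
`d₁` of the `⌊r / k⌋` smallest prime factors satisfies `d₁ ^ k ≤ rad n ≤ n` (each block of `⌊r / k⌋`
consecutive prime factors dominates the first one) and `τ(d₁) = 2 ^ ⌊r / k⌋`, which makes
`k ^ r ≤ 2 ^ (k r) ≤ 2 ^ (k ^ 2) τ(d₁) ^ (k ^ 2)`. Hence `τ(n) ≤ 2 ^ (k ^ 2) τ(d₁) ^ (k ^ 2) τ(d₀)`,
and whichever of `d₀`, `d₁` has more divisors works, since `k ^ 2 + 1 ≤ k ^ 3`.
-/

open Finset ArithmeticFunction

section SortedProd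

variable {M : Type*} [CommMonoid M] [PartialOrder M] [IsOrderedMonoid M] {l : List M}

theorem List.SortedLE.prod_take_le_prod_take_drop_s3 (hl : l.SortedLE) {t : ℕ}
    (ht : 2 * t ≤ l.length) : (l.take t).prod ≤ ((l.drop t).take t).prod := by
  refine List.Forall₂.prod_le_prod' (List.forall₂_iff_get.2 ⟨?_, fun i h₁ h₂ => ?_⟩)
  · simp only [List.length_take, List.length_drop]
    omega
  · simp only [List.get_eq_getElem, List.getElem_take, List.getElem_drop]
    exact hl.getElem_le_getElem_of_le (by omega)

theorem List.SortedLE.prod_take_pow_le_prod (hl : l.SortedLE) (hl₁ : ∀ x ∈ l, 1 ≤ x) {t k : ℕ}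
    (htk : t * k ≤ l.length) : (l.take t).prod ^ k ≤ l.prod := by
  induction k generalizing l with
  | zero => simpa using List.one_le_prod_of_one_le hl₁
  | succ k ih =>
    rw [Nat.mul_succ] at htk
    have h_take_pow : (l.take t).prod ^ k ≤ ((l.drop t).take t).prod ^ k := by
      rcases k.eq_zero_or_pos with rfl | hk
      · simp
      exact pow_le_pow_left' (hl.prod_take_le_prod_take_drop_s3 (by nlinarith)) k
    have h_drop : ((l.drop t).take t).prod ^ k ≤ (l.drop t).prod :=
      ih hl.pairwise.drop.sortedLE (fun x hx => hl₁ x (List.mem_of_mem_drop hx))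
        (by rw [List.length_drop]; omega)
    calc (l.take t).prod ^ (k + 1) = (l.take t).prod * (l.take t).prod ^ k := pow_succ' _ _
      _ ≤ (l.take t).prod * (l.drop t).prod := by grw [h_take_pow, h_drop]
      _ = l.prod := List.prod_take_mul_prod_drop l t

end SortedProd

theorem Nat.card_divisors_prod_of_prime {s : Finset ℕ} (hs : ∀ p ∈ s, p.Prime) :
    (∏ p ∈ s, p).divisors.card = 2 ^ s.card := by
  rw [← sigma_zero_apply, isMultiplicative_sigma.map_prod_of_prime s hs, ← prod_const]
  refine prod_congr rfl fun p hp => ?_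
  simpa using sigma_zero_apply_prime_pow (i := 1) (hs p hp)

theorem Nat.card_divisors_eq_prod_of_primeFactors_subset {m : ℕ} (hm : m ≠ 0) {s : Finset ℕ}
    (hs : m.primeFactors ⊆ s) : m.divisors.card = ∏ p ∈ s, (m.factorization p + 1) := by
  rw [Nat.card_divisors hm]
  exact prod_subset hs fun p _ hp => by
    simp [Finsupp.notMem_support_iff.1 (Nat.support_factorization m ▸ hp)]

theorem Nat.card_divisors_le_pow_mul_card_divisors_floorRoot {n k : ℕ} (hn : n ≠ 0)
    (hk : k ≠ 0) : n.divisors.card ≤ k ^ n.primeFactors.card * (floorRoot k n).divisors.card := by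
  have h_dvd : floorRoot k n ∣ n := (dvd_pow_self _ hk).trans floorRoot_pow_dvd
  calc n.divisors.card = ∏ p ∈ n.primeFactors, (n.factorization p + 1) := Nat.card_divisors hn
    _ ≤ ∏ p ∈ n.primeFactors, k * (n.factorization p / k + 1) :=
        prod_le_prod' fun p _ => Nat.lt_mul_div_succ _ (Nat.pos_of_ne_zero hk)
    _ = k ^ n.primeFactors.card * (floorRoot k n).divisors.card := by
        rw [prod_mul_distrib, prod_const, card_divisors_eq_prod_of_primeFactors_subset
          (floorRoot_ne_zero.2 ⟨hk, hn⟩) (primeFactors_mono h_dvd hn), factorization_floorRoot]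
        simp only [Finsupp.floorDiv_apply, Nat.floorDiv_eq_div]

theorem Nat.exists_dvd_pow_le_card_divisors_eq_two_pow {n : ℕ} (hn : n ≠ 0) (k : ℕ) :
    ∃ d, d ∣ n ∧ d ^ k ≤ n ∧ d.divisors.card = 2 ^ (n.primeFactors.card / k) := by
  set l := n.primeFactors.sort
  set t := n.primeFactors.card / k
  have hl_len : l.length = n.primeFactors.card := length_sort _
  have hl_prime : ∀ p ∈ l, p.Prime := fun p hp => prime_of_mem_primeFactors ((mem_sort _).1 hp)
  have hl_dvd : l.prod ∣ n := by
    have hl_prod : ∏ p ∈ n.primeFactors, p = l.prod := by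
      simpa using List.prod_toFinset id (sort_nodup n.primeFactors (· ≤ ·))
    exact hl_prod ▸ prod_primeFactors_dvd n
  have h_nodup : (l.take t).Nodup := (sort_nodup _ _).sublist (List.take_sublist _ _)
  have h_prod : ∏ p ∈ (l.take t).toFinset, p = (l.take t).prod := by
    simpa using List.prod_toFinset id h_nodup
  refine ⟨(l.take t).prod, (List.take_sublist _ _).prod_dvd_prod.trans hl_dvd, ?_, ?_⟩
  · refine (List.SortedLE.prod_take_pow_le_prod (sortedLT_sort _).sortedLE
      (fun p hp => (hl_prime p hp).one_lt.le) ?_).trans (le_of_dvd (pos_of_ne_zero hn) hl_dvd)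
    rw [hl_len]
    exact Nat.div_mul_le_self _ _
  · rw [← h_prod, card_divisors_prod_of_prime
      fun p hp => hl_prime p (List.mem_of_mem_take (List.mem_toFinset.1 hp)),
      List.toFinset_card_of_nodup h_nodup, List.length_take, hl_len,
      min_eq_left (Nat.div_le_self _ _)]

theorem Nat.pow_le_two_pow_sq_mul_pow_sq {k : ℕ} (hk : 0 < k) (r : ℕ) :
    k ^ r ≤ 2 ^ (k ^ 2) * (2 ^ (r / k)) ^ (k ^ 2) := by
  calc k ^ r ≤ (2 ^ k) ^ r := Nat.pow_le_pow_left Nat.lt_two_pow_self.le r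
    _ = 2 ^ (k * r) := (pow_mul _ _ _).symm
    _ ≤ 2 ^ (k * (k * (r / k) + k)) :=
        Nat.pow_le_pow_right two_pos (Nat.mul_le_mul_left k (Nat.lt_mul_div_succ r hk).le)
    _ = 2 ^ (k ^ 2) * (2 ^ (r / k)) ^ (k ^ 2) := by ring

theorem Nat.cast_le_rpow_one_div_of_pow_le {d n k : ℕ} (hk : k ≠ 0) (h : d ^ k ≤ n) :
    (d : ℝ) ≤ (n : ℝ) ^ ((1 : ℝ) / k) := by
  rw [one_div, Real.le_rpow_inv_iff_of_pos (by positivity) (by positivity) (by positivity)]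
  exact_mod_cast h

/-- For every positive integer `n` and `k ≥ 2` there is a divisor `d ∣ n` with
`d ≤ n^(1/k)` and `τ(n) ≤ 2^(k^2) · τ(d)^(k^3)`. -/
theorem divisor_bound_general (n : ℕ) (hn : 0 < n) (k : ℕ) (hk : 2 ≤ k) :
    ∃ d : ℕ, d ∣ n ∧ (d : ℝ) ≤ (n : ℝ) ^ ((1 : ℝ) / k) ∧
      n.divisors.card ≤ 2 ^ (k ^ 2) * d.divisors.card ^ (k ^ 3) := by
  have hk₀ : k ≠ 0 := by omega
  obtain ⟨d₁, hd₁n, hd₁k, hτd₁⟩ := Nat.exists_dvd_pow_le_card_divisors_eq_two_pow hn.ne' k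
  set d₀ := Nat.floorRoot k n
  have hd₀k : d₀ ^ k ∣ n := Nat.floorRoot_pow_dvd
  set M := max d₁.divisors.card d₀.divisors.card
  have hM : 1 ≤ M := le_max_of_le_right <| card_pos.2
    ⟨1, Nat.one_mem_divisors.2 (Nat.floorRoot_ne_zero.2 ⟨hk₀, hn.ne'⟩)⟩
  have hτn : n.divisors.card ≤ 2 ^ (k ^ 2) * M ^ (k ^ 3) :=
    calc n.divisors.card ≤ k ^ n.primeFactors.card * d₀.divisors.card :=
          Nat.card_divisors_le_pow_mul_card_divisors_floorRoot hn.ne' hk₀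
      _ ≤ 2 ^ (k ^ 2) * d₁.divisors.card ^ (k ^ 2) * d₀.divisors.card := by
          rw [hτd₁]
          gcongr
          exact Nat.pow_le_two_pow_sq_mul_pow_sq (by omega) _
      _ ≤ 2 ^ (k ^ 2) * M ^ (k ^ 2 + 1) := by
          rw [pow_succ M, ← mul_assoc]
          gcongr <;> simp [M]
      _ ≤ 2 ^ (k ^ 2) * M ^ (k ^ 3) :=
          Nat.mul_le_mul_left _ (Nat.pow_le_pow_right hM (by nlinarith))
  obtain ⟨d, hdn, hdk, hτd⟩ : ∃ d, d ∣ n ∧ d ^ k ≤ n ∧ d.divisors.card = M := by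
    rcases le_total d₁.divisors.card d₀.divisors.card with h | h
    · exact ⟨d₀, (dvd_pow_self d₀ hk₀).trans hd₀k, Nat.le_of_dvd hn hd₀k, (max_eq_right h).symm⟩
    · exact ⟨d₁, hd₁n, hd₁k, (max_eq_left h).symm⟩
  exact ⟨d, hdn, Nat.cast_le_rpow_one_div_of_pow_le hk₀ hdk, hτd ▸ hτn⟩
end

section
/- Let K/ℚ be a Galois extension of degree k with Galois group {σ_1, ..., σ_k}, let ω_1, ..., ω_k be a ℚ-basis of K, and let A = (σ_i(ω_j)). Then for any fixed row index i, the k minors det(A^{ij}), j = 1, ..., k (obtained by deleting the i-th row and j-th column), are linearly independent over ℚ; in particular each det(A^{ij}) is nonzero. -/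
/-!
By Dedekind's independence of characters the matrix `A = (σᵢ(ωⱼ))` is invertible. The
automorphism `τ = σₛσᵢ⁻¹` permutes the rows of `A` by left multiplication in the Galois group and
fixes `ℚ`, so it carries the row-`i` minors to `±` the row-`s` minors, with one sign for all `j`.
Hence a rational relation `∑ cⱼ det A^{ij} = 0` gives `∑ cⱼ det A^{sj} = 0` for every row `s`,
i.e. `(±cⱼ)ⱼ` is killed by the adjugate of `A`, which is invertible; so `c = 0`.
-/

open Matrix

theorem Matrix.det_of_algHom_apply_basis_ne_zero {ι K M L : Type*} [Fintype ι] [DecidableEq ι]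
    [CommSemiring K] [Semiring M] [Algebra K M] [Field L] [Algebra K L]
    (σ : ι → (M →ₐ[K] L)) (hσ : Function.Injective σ) (b : Module.Basis ι K M) :
    (of fun i j => σ i (b j)).det ≠ 0 := by
  have hrows : LinearIndependent L (of fun i j => σ i (b j)).row :=
    ((linearIndependent_algHom_toLinearMap K M L).comp σ hσ).map'
      (b.constr L).symm.toLinearMap (b.constr L).symm.ker
  exact ((isUnit_iff_isUnit_det _).mp (linearIndependent_rows_iff_isUnit.mp hrows)).ne_zero

theorem Matrix.eq_zero_of_forall_sum_mul_det_submatrix_succAbove_eq_zero {R : Type*} [CommRing R]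
    [NoZeroDivisors R] {n : ℕ} (A : Matrix (Fin (n + 1)) (Fin (n + 1)) R) (hA : A.det ≠ 0)
    (c : Fin (n + 1) → R)
    (hc : ∀ s : Fin (n + 1), ∑ j, c j * (A.submatrix s.succAbove j.succAbove).det = 0) :
    c = 0 := by
  set u : Fin (n + 1) → R := fun j => (-1) ^ (j : ℕ) * c j
  have hu : u ᵥ* adjugate A = 0 := by
    funext s
    calc (u ᵥ* adjugate A) s
        = (-1) ^ (s : ℕ) * ∑ j, c j * (A.submatrix s.succAbove j.succAbove).det := by
          simp only [vecMul, dotProduct, adjugate_fin_succ_eq_det_submatrix, Finset.mul_sum, u]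
          refine Finset.sum_congr rfl fun j _ => ?_
          have hsq : (-1 : R) ^ (j : ℕ) * (-1) ^ (j : ℕ) = 1 := by
            rw [← mul_pow, neg_one_mul, neg_neg, one_pow]
          rw [pow_add]
          linear_combination
            (c j * (A.submatrix s.succAbove j.succAbove).det * (-1) ^ (s : ℕ)) * hsq
      _ = 0 := by rw [hc, mul_zero]
  have hdet_u : A.det • u = 0 := by
    rw [← vecMul_one u, ← vecMul_smul, ← adjugate_mul, ← vecMul_vecMul, hu, zero_vecMul]
  funext j
  have hj : u j = 0 := (smul_eq_zero.mp (congrFun hdet_u j)).resolve_left hA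
  exact ((isUnit_neg_one (α := R)).pow _).mul_right_eq_zero.mp hj

namespace Equiv.Perm

variable {n : ℕ}

def succAboveConj (p : Perm (Fin (n + 1))) (i : Fin (n + 1)) : Perm (Fin n) :=
  (finSuccAboveEquiv i).trans <|
    (p.subtypeEquiv (p := (· ≠ i)) (q := (· ≠ p i)) fun _ => p.injective.ne_iff.symm).trans
      (finSuccAboveEquiv (p i)).symm

theorem succAbove_succAboveConj (p : Perm (Fin (n + 1))) (i : Fin (n + 1)) (t : Fin n) :
    (p i).succAbove (p.succAboveConj i t) = p (i.succAbove t) := by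
  simp only [succAboveConj, Equiv.trans_apply, subtypeEquiv_apply, finSuccAboveEquiv_apply]
  exact congrArg Subtype.val ((finSuccAboveEquiv (p i)).apply_symm_apply _)

end Equiv.Perm

theorem Matrix.det_submatrix_perm_succAbove {R β : Type*} [CommRing R] {n : ℕ}
    (A : Matrix (Fin (n + 1)) β R) (p : Equiv.Perm (Fin (n + 1))) (i : Fin (n + 1))
    (f : Fin n → β) :
    (A.submatrix (p ∘ i.succAbove) f).det =
      Equiv.Perm.sign (p.succAboveConj i) * (A.submatrix (p i).succAbove f).det := by
  rw [← det_permute]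
  congr 1
  ext t j
  simp [Equiv.Perm.succAbove_succAboveConj]

theorem RingHom.map_det_submatrix_succAbove {R β : Type*} [CommRing R] {n : ℕ}
    (φ : R →+* R) (A : Matrix (Fin (n + 1)) β R) (p : Equiv.Perm (Fin (n + 1)))
    (hp : ∀ k j, φ (A k j) = A (p k) j) (i : Fin (n + 1)) (f : Fin n → β) :
    φ (A.submatrix i.succAbove f).det =
      Equiv.Perm.sign (p.succAboveConj i) * (A.submatrix (p i).succAbove f).det := by
  rw [RingHom.map_det, ← det_submatrix_perm_succAbove]
  congr 1
  ext t j
  exact hp _ _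

theorem sum_smul_det_submatrix_succAbove_eq_zero_of_bijective {F K β : Type*} [CommRing F]
    [CommRing K] [Algebra F K] {n : ℕ} {σ : Fin (n + 1) → (K ≃ₐ[F] K)}
    (hσ : Function.Bijective σ) (v : β → K) (f : Fin (n + 1) → Fin n → β)
    (c : Fin (n + 1) → F) {i : Fin (n + 1)}
    (hi : ∑ j, c j • ((of fun k l => σ k (v l)).submatrix i.succAbove (f j)).det = 0)
    (s : Fin (n + 1)) :
    ∑ j, c j • ((of fun k l => σ k (v l)).submatrix s.succAbove (f j)).det = 0 := by
  set τ := σ s * (σ i)⁻¹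
  set p : Equiv.Perm (Fin (n + 1)) :=
    (Equiv.ofBijective σ hσ).symm.permCongr (Equiv.mulLeft τ)
  have hp : ∀ k, σ (p k) = τ * σ k := fun k => (Equiv.ofBijective σ hσ).apply_symm_apply _
  have hpi : p i = s := hσ.1 (by rw [hp, inv_mul_cancel_right])
  have hτ : ∀ j, τ ((of fun k l => σ k (v l)).submatrix i.succAbove (f j)).det =
      Equiv.Perm.sign (p.succAboveConj i) *
        ((of fun k l => σ k (v l)).submatrix s.succAbove (f j)).det := fun j =>
    hpi ▸ (τ : K →+* K).map_det_submatrix_succAbove _ p (fun k l => by simp [hp]) i (f j)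
  have hsign : IsUnit ((Equiv.Perm.sign (p.succAboveConj i) : ℤ) : K) :=
    (Equiv.Perm.sign _).isUnit.map (Int.castRingHom K)
  have hτi := congrArg τ hi
  simp only [map_sum, map_smul, map_zero, hτ, ← mul_smul_comm, ← Finset.mul_sum] at hτi
  exact hsign.mul_right_eq_zero.mp hτi

theorem galois_matrix_minors_linear_independent_general
    (K : Type*) [Field K] [Algebra ℚ K]
    (n : ℕ)
    (σ : Fin (n + 1) → (K ≃ₐ[ℚ] K)) (hσ : Function.Bijective σ)
    (ω : Module.Basis (Fin (n + 1)) ℚ K) (i : Fin (n + 1)) :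
    LinearIndependent ℚ (fun j : Fin (n + 1) =>
      ((Matrix.of fun i' j' => σ i' (ω j')).submatrix i.succAbove j.succAbove).det) ∧
    ∀ j : Fin (n + 1),
      ((Matrix.of fun i' j' => σ i' (ω j')).submatrix i.succAbove j.succAbove).det ≠ 0 := by
  set A : Matrix (Fin (n + 1)) (Fin (n + 1)) K := of fun i' j' => σ i' (ω j')
  have hA : A.det ≠ 0 := det_of_algHom_apply_basis_ne_zero (fun k => (σ k : K →ₐ[ℚ] K))
    (AlgEquiv.coe_toAlgHom_injective.comp hσ.1) ω
  have hli :
      LinearIndependent ℚ fun j : Fin (n + 1) => (A.submatrix i.succAbove j.succAbove).det := by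
    refine Fintype.linearIndependent_iff.mpr fun c hc => ?_
    have hrows := sum_smul_det_submatrix_succAbove_eq_zero_of_bijective hσ ω
      (fun j : Fin (n + 1) => j.succAbove) c hc
    have hc' := A.eq_zero_of_forall_sum_mul_det_submatrix_succAbove_eq_zero hA
      (fun j => algebraMap ℚ K (c j)) fun s => by simpa only [Algebra.smul_def] using hrows s
    exact fun j => (algebraMap ℚ K).injective (by simpa using congrFun hc' j)
  exact ⟨hli, hli.ne_zero⟩

/-- For a Galois extension `K/ℚ` of degree `n+1`, with Galois group `{σ₁,…}` and a
`ℚ`-basis `ω` of `K`, for `A = (σᵢ(ωⱼ))` and any fixed row `i`, the minors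
`det A^{ij}` (delete row `i`, column `j`) are linearly independent over `ℚ`;
in particular each is nonzero. -/
theorem galois_matrix_minors_linear_independent
    (K : Type*) [Field K] [Algebra ℚ K] [FiniteDimensional ℚ K] [IsGalois ℚ K]
    (n : ℕ) (hk : Module.finrank ℚ K = n + 1)
    (σ : Fin (n + 1) → (K ≃ₐ[ℚ] K)) (hσ : Function.Bijective σ)
    (ω : Module.Basis (Fin (n + 1)) ℚ K) (i : Fin (n + 1)) :
    LinearIndependent ℚ (fun j : Fin (n + 1) =>
      ((Matrix.of fun i' j' => σ i' (ω j')).submatrix i.succAbove j.succAbove).det) ∧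
    ∀ j : Fin (n + 1),
      ((Matrix.of fun i' j' => σ i' (ω j')).submatrix i.succAbove j.succAbove).det ≠ 0 :=
  galois_matrix_minors_linear_independent_general K n σ hσ ω i
end

section
/- Let K be a number field of degree k over ℚ with ring of integers O_K and fixed integral basis ω_1, ..., ω_k. For β = b_1ω_1 + ... + b_kω_k with integers |b_j| ≤ B and N_{K/ℚ}(β) = b ≠ 0, the number of units ε of O_K such that εβ = b'_1ω_1 + ... + b'_kω_k with all |b'_j| ≤ B is at most O_ε(B^ε) for every ε > 0 (implied constant depending on K, the ω_j, and ε). -/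
/-!
If `β` and `uβ` both have coordinates bounded by `B`, then every archimedean absolute value of
`β` and of `uβ` is at most `A B`, with `A` depending only on the basis `ω`. Both have nonzero
integral norm, so the product formula also bounds every one of these absolute values below by
`(A B)^(-[K:ℚ])`. Hence `|log w(u)| = O(log B)` at every place, i.e. the logarithmic embedding
of `u` lies in a ball of radius `O(log B)`. The unit lattice has rank `r`, so such a ball
contains `O((log B)^r)` lattice points, each the image of `|μ_K|` units, and
`(log B)^r = O(B^ε)`.
-/

open NumberField NumberField.InfinitePlace NumberField.Units Module Metric

namespace AddMonoidHom

variable {G H : Type*} [AddGroup G] [AddGroup H] (f : G →+ H)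

theorem card_preimage_singleton_le (y : H) : Nat.card (f ⁻¹' {y}) ≤ Nat.card f.ker := by
  rcases em (y ∈ Set.range f) with ⟨x, rfl⟩ | hy
  · exact (Nat.card_congr (f.fiberEquivKer x)).le
  · simp [Set.preimage_singleton_eq_empty.mpr hy]

variable [Finite f.ker]

theorem finite_preimage_singleton (y : H) : (f ⁻¹' {y}).Finite := by
  rcases em (y ∈ Set.range f) with ⟨x, rfl⟩ | hy
  · exact Set.finite_coe_iff.mp (Finite.of_equiv _ (f.fiberEquivKer x).symm)
  · simp [Set.preimage_singleton_eq_empty.mpr hy]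

theorem finite_preimage {s : Set H} (hs : s.Finite) : (f ⁻¹' s).Finite :=
  hs.preimage' fun y _ ↦ f.finite_preimage_singleton y

theorem card_preimage_le (s : Finset H) : Nat.card (f ⁻¹' s) ≤ Nat.card f.ker * s.card := by
  rw [Finset.card_preimage_eq_sum_card_image_eq fun y _ ↦ f.finite_preimage_singleton y, mul_comm]
  exact Finset.sum_le_card_nsmul _ _ _ fun y _ ↦ f.card_preimage_singleton_le y

end AddMonoidHom

namespace ZLattice

variable {E ι : Type*} [NormedAddCommGroup E] [NormedSpace ℝ E] [FiniteDimensional ℝ E]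
  {L : Submodule ℤ E} [DiscreteTopology L] [Fintype ι] [DecidableEq ι] (b : Basis ι ℤ L)

theorem inter_closedBall_subset_image_piFinset {R : ℝ} {M : ℕ} (hRM : (normBound b)⁻¹ * R ≤ M) :
    (L : Set E) ∩ closedBall 0 R ⊆ (fun p : ι → ℤ ↦ ∑ i, p i • (b i : E)) ''
      ↑(Fintype.piFinset fun _ : ι ↦ Finset.Icc (-M : ℤ) M) := by
  rintro x ⟨hxL, hxR⟩
  refine ⟨fun i ↦ b.repr ⟨x, hxL⟩ i, Fintype.mem_piFinset.mpr fun i ↦ ?_, ?_⟩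
  · have hle : ((|b.repr ⟨x, hxL⟩ i| : ℤ) : ℝ) ≤ M :=
      (abs_repr_le b _ i).trans <| (mul_le_mul_of_nonneg_left (mem_closedBall_zero_iff.mp hxR)
        (inv_nonneg.mpr (normBound_pos b).le)).trans hRM
    exact Finset.mem_Icc.mpr (abs_le.mp (by exact_mod_cast hle))
  · simpa only [Submodule.coe_sum, Submodule.coe_smul_of_tower] using
      congrArg Subtype.val (b.sum_repr ⟨x, hxL⟩)

theorem ncard_inter_closedBall_le (R : ℝ) :
    ((L : Set E) ∩ closedBall 0 R).ncard ≤
      (2 * ⌈(normBound b)⁻¹ * R⌉₊ + 1) ^ Fintype.card ι := by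
  refine (Set.ncard_le_ncard (inter_closedBall_subset_image_piFinset b (Nat.le_ceil _))
    ((Finset.finite_toSet _).image _)).trans ((Set.ncard_image_le (Finset.finite_toSet _)).trans ?_)
  rw [Set.ncard_coe_finset, Fintype.card_piFinset, Finset.prod_const, Finset.card_univ,
    Int.card_Icc]
  exact le_of_eq (by congr 1; omega)

end ZLattice

theorem Real.exists_pow_add_mul_log_le_mul_rpow {a b : ℝ} (ha : 0 < a) (hb : 0 ≤ b) (r : ℕ)
    {ε : ℝ} (hε : 0 < ε) :
    ∃ C > 0, ∀ x : ℝ, 1 ≤ x → (a + b * Real.log x) ^ r ≤ C * x ^ ε := by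
  set δ := ε / (r + 1)
  have hδ : 0 < δ := by positivity
  refine ⟨(a + b / δ) ^ r, by positivity, fun x hx ↦ ?_⟩
  have hlog : Real.log x ≤ x ^ δ / δ := Real.log_le_rpow_div (by linarith) hδ
  have hxδ : 1 ≤ x ^ δ := Real.one_le_rpow hx hδ.le
  have hlin : a + b * Real.log x ≤ (a + b / δ) * x ^ δ :=
    calc a + b * Real.log x ≤ a * x ^ δ + b * (x ^ δ / δ) := by
          gcongr
          exact le_mul_of_one_le_right ha.le hxδ
      _ = (a + b / δ) * x ^ δ := by ring
  calc (a + b * Real.log x) ^ r ≤ ((a + b / δ) * x ^ δ) ^ r := by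
        gcongr
        have := Real.log_nonneg hx
        positivity
    _ = (a + b / δ) ^ r * x ^ (δ * r) := by
        rw [mul_pow, Real.rpow_mul_natCast (by linarith)]
    _ ≤ (a + b / δ) ^ r * x ^ ε := by
        gcongr
        rw [div_mul_eq_mul_div, div_le_iff₀ (by positivity)]
        nlinarith

namespace NumberField.InfinitePlace

variable {K : Type*} [Field K]

theorem apply_sum_zsmul_le {ι : Type*} [Fintype ι] (w : InfinitePlace K) (x : ι → K)
    {c : ι → ℤ} {B : ℝ} (hc : ∀ i, |(c i : ℝ)| ≤ B) : w (∑ i, c i • x i) ≤ B * ∑ i, w (x i) :=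
  calc w (∑ i, c i • x i) ≤ ∑ i, w (c i • x i) := w.1.sum_le _ _
    _ = ∑ i, |(c i : ℝ)| * w (x i) := by
        simp_rw [zsmul_eq_mul, map_mul, InfinitePlace.map_intCast, Int.norm_eq_abs]
    _ ≤ ∑ i, B * w (x i) := by gcongr with i; exact hc i
    _ = B * ∑ i, w (x i) := (Finset.mul_sum _ _ _).symm

variable [NumberField K]

theorem exists_apply_le_of_abs_repr_le {ι : Type*} [Fintype ι] (ω : Basis ι ℤ (𝓞 K)) :
    ∃ A : ℝ, 1 ≤ A ∧ ∀ (x : 𝓞 K) {B : ℝ}, 0 ≤ B → (∀ i, |(ω.repr x i : ℝ)| ≤ B) →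
      ∀ w : InfinitePlace K, w x ≤ A * B := by
  set S := ∑ w : InfinitePlace K, ∑ i, w (ω i)
  have hS : ∀ w : InfinitePlace K, ∑ i, w (ω i) ≤ S := fun w ↦
    Finset.single_le_sum (f := fun w : InfinitePlace K ↦ ∑ i, w (ω i))
      (fun w _ ↦ Finset.sum_nonneg fun i _ ↦ apply_nonneg w _) (Finset.mem_univ w)
  have hS0 : 0 ≤ S := Finset.sum_nonneg fun w _ ↦ Finset.sum_nonneg fun i _ ↦ apply_nonneg w _
  refine ⟨1 + S, by linarith, fun x B hB hx w ↦ ?_⟩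
  calc w x = w (∑ i, ω.repr x i • (ω i : K)) := by
        conv_lhs => rw [← ω.sum_repr x]
        push_cast
        rfl
    _ ≤ B * ∑ i, w (ω i) := apply_sum_zsmul_le w _ hx
    _ ≤ B * (1 + S) := by gcongr; linarith [hS w]
    _ = (1 + S) * B := mul_comm _ _

theorem one_le_prod_apply_pow_mult {x : 𝓞 K} (hx : x ≠ 0) :
    1 ≤ ∏ w : InfinitePlace K, w x ^ mult w := by
  rw [prod_eq_abs_norm, ← Algebra.coe_norm_int]
  exact_mod_cast Int.one_le_abs (Algebra.norm_ne_zero_iff.mpr hx)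

theorem inv_pow_finrank_le_apply {x : 𝓞 K} (hx : x ≠ 0) {D : ℝ} (hD : 1 ≤ D)
    (hxD : ∀ w : InfinitePlace K, w x ≤ D) (w : InfinitePlace K) :
    (D ^ finrank ℚ K)⁻¹ ≤ w x := by
  classical
  have hpos : ∀ w : InfinitePlace K, 0 < w x := fun w ↦ pos_iff.mpr (by simpa using hx)
  have hothers : ∏ w' ∈ Finset.univ.erase w, w' x ^ mult w' ≤ D ^ finrank ℚ K :=
    calc ∏ w' ∈ Finset.univ.erase w, w' x ^ mult w'
        ≤ ∏ w' ∈ Finset.univ.erase w, D ^ mult w' := by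
          gcongr with w'
          exact hxD w'
      _ = D ^ ∑ w' ∈ Finset.univ.erase w, mult w' := Finset.prod_pow_eq_pow_sum _ _ _
      _ ≤ D ^ finrank ℚ K := by
          rw [← sum_mult_eq]
          exact pow_le_pow_right₀ hD (Finset.sum_le_sum_of_subset (Finset.subset_univ _))
  have hpow : (D ^ finrank ℚ K)⁻¹ ≤ w x ^ mult w := by
    rw [inv_le_iff_one_le_mul₀ (by positivity)]
    calc 1 ≤ ∏ w : InfinitePlace K, w x ^ mult w := one_le_prod_apply_pow_mult hx
      _ = w x ^ mult w * ∏ w' ∈ Finset.univ.erase w, w' x ^ mult w' :=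
          (Finset.mul_prod_erase _ _ (Finset.mem_univ w)).symm
      _ ≤ w x ^ mult w * D ^ finrank ℚ K := by gcongr
  rcases le_or_gt 1 (w x) with h | h
  · exact (inv_le_one_of_one_le₀ (one_le_pow₀ hD)).trans h
  · exact hpow.trans (pow_le_of_le_one (hpos w).le h.le mult_pos.ne')

theorem log_apply_mem_Icc {x : 𝓞 K} (hx : x ≠ 0) {D : ℝ} (hD : 1 ≤ D)
    (hxD : ∀ w : InfinitePlace K, w x ≤ D) (w : InfinitePlace K) :
    Real.log (w x) ∈ Set.Icc (-(finrank ℚ K * Real.log D)) (Real.log D) := by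
  have hlow := inv_pow_finrank_le_apply hx hD hxD w
  have hpos : 0 < (D ^ finrank ℚ K)⁻¹ := by positivity
  constructor
  · simpa [Real.log_inv, Real.log_pow] using Real.log_le_log hpos hlow
  · exact Real.log_le_log (hpos.trans_le hlow) (hxD w)

end NumberField.InfinitePlace

namespace NumberField.Units

open scoped Classical
open dirichletUnitTheorem

variable (K : Type*) [Field K] [NumberField K]

instance : Finite (logEmbedding K).ker := by
  rw [logEmbedding_ker]
  exact inferInstanceAs (Finite (torsion K))

theorem setOf_norm_logEmbedding_le_eq_preimage (R : ℝ) :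
    {u : (𝓞 K)ˣ | ‖logEmbedding K (Additive.ofMul u)‖ ≤ R} =
      logEmbedding K ⁻¹' ((unitLattice K : Set (logSpace K)) ∩ closedBall 0 R) := by
  ext u
  have hu : logEmbedding K u ∈ unitLattice K := ⟨u, trivial, rfl⟩
  exact ⟨fun h ↦ ⟨hu, mem_closedBall_zero_iff.mpr h⟩, fun h ↦ mem_closedBall_zero_iff.mp h.2⟩

theorem finite_setOf_norm_logEmbedding_le (R : ℝ) :
    {u : (𝓞 K)ˣ | ‖logEmbedding K (Additive.ofMul u)‖ ≤ R}.Finite := by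
  rw [setOf_norm_logEmbedding_le_eq_preimage]
  exact (logEmbedding K).finite_preimage (unitLattice_inter_ball_finite K R)

theorem card_setOf_norm_logEmbedding_le (R : ℝ) :
    Nat.card {u : (𝓞 K)ˣ | ‖logEmbedding K (Additive.ofMul u)‖ ≤ R} ≤
      Nat.card (torsion K) *
        (2 * ⌈(ZLattice.normBound (basisUnitLattice K))⁻¹ * R⌉₊ + 1) ^ rank K := by
  have hfin := unitLattice_inter_ball_finite K R
  rw [setOf_norm_logEmbedding_le_eq_preimage, ← hfin.coe_toFinset]
  refine ((logEmbedding K).card_preimage_le _).trans (Nat.mul_le_mul ?_ ?_)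
  · rw [logEmbedding_ker]
    rfl
  · rw [← Set.ncard_eq_toFinset_card _ hfin]
    simpa using ZLattice.ncard_inter_closedBall_le (basisUnitLattice K) R

variable {K} in
theorem norm_logEmbedding_le {x : 𝓞 K} (hx : x ≠ 0) (u : (𝓞 K)ˣ) {D : ℝ} (hD : 1 ≤ D)
    (hxD : ∀ w : InfinitePlace K, w x ≤ D) (huxD : ∀ w : InfinitePlace K, w (u * x : 𝓞 K) ≤ D) :
    ‖logEmbedding K (Additive.ofMul u)‖ ≤ 2 * (finrank ℚ K + 1) * Real.log D := by
  have hlogD := Real.log_nonneg hD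
  have habs (w : InfinitePlace K) : |Real.log (w u)| ≤ (finrank ℚ K + 1) * Real.log D := by
    have hxw := log_apply_mem_Icc hx hD hxD w
    have huxw := log_apply_mem_Icc (mul_ne_zero u.ne_zero hx) hD huxD w
    have hlog : Real.log (w (u * x : 𝓞 K)) = Real.log (w u) + Real.log (w x) := by
      push_cast
      rw [map_mul, Real.log_mul (Units.pos_at_place u w).ne'
        (pos_iff.mpr (by simpa using hx)).ne']
    rw [abs_le]
    constructor <;> linarith [hxw.1, hxw.2, huxw.1, huxw.2]
  rw [pi_norm_le_iff_of_nonneg (by positivity)]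
  intro w
  rw [logEmbedding_component, Real.norm_eq_abs, abs_mul, Nat.abs_cast]
  calc (mult w.1 : ℝ) * |Real.log (w.1 u)| ≤ 2 * ((finrank ℚ K + 1) * Real.log D) :=
        mul_le_mul (by rw [mult]; split_ifs <;> norm_num) (habs w) (abs_nonneg _) zero_le_two
    _ = 2 * (finrank ℚ K + 1) * Real.log D := by ring

theorem exists_card_setOf_norm_logEmbedding_le :
    ∃ c : ℝ, 0 ≤ c ∧ ∀ R : ℝ, 0 ≤ R →
      (Nat.card {u : (𝓞 K)ˣ | ‖logEmbedding K (Additive.ofMul u)‖ ≤ R} : ℝ) ≤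
        Nat.card (torsion K) * (c * R + 3) ^ rank K := by
  set c := (ZLattice.normBound (basisUnitLattice K))⁻¹
  have hc : 0 ≤ c := inv_nonneg.mpr (ZLattice.normBound_pos _).le
  refine ⟨2 * c, by positivity, fun R hR ↦ ?_⟩
  have hceil := Nat.ceil_lt_add_one (mul_nonneg hc hR)
  calc _ ≤ (Nat.card (torsion K) * (2 * ⌈c * R⌉₊ + 1) ^ rank K : ℝ) := by
        exact_mod_cast card_setOf_norm_logEmbedding_le K R
    _ ≤ Nat.card (torsion K) * (2 * c * R + 3) ^ rank K := by
        gcongr _ * ?_ ^ _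
        linarith

variable {K} in
theorem exists_norm_logEmbedding_le_of_abs_repr_le {ι : Type*} [Fintype ι]
    (ω : Basis ι ℤ (𝓞 K)) :
    ∃ A : ℝ, 1 ≤ A ∧ ∀ {x : 𝓞 K}, x ≠ 0 → ∀ (u : (𝓞 K)ˣ) {B : ℝ}, 1 ≤ B →
      (∀ i, |(ω.repr x i : ℝ)| ≤ B) → (∀ i, |(ω.repr (u * x) i : ℝ)| ≤ B) →
        ‖logEmbedding K (Additive.ofMul u)‖ ≤ 2 * (finrank ℚ K + 1) * Real.log (A * B) := by
  obtain ⟨A, hA1, hA⟩ := exists_apply_le_of_abs_repr_le ω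
  refine ⟨A, hA1, fun hx u B hB hxB huxB ↦ ?_⟩
  exact norm_logEmbedding_le hx u (one_le_mul_of_one_le_of_one_le hA1 hB)
    (hA _ (by linarith) hxB) (hA _ (by linarith) huxB)

end NumberField.Units

/-- For `β = ∑ bⱼωⱼ` with `|bⱼ| ≤ B` and nonzero norm, the number of units `u` of `O_K`
such that `u·β` has all coordinates of absolute value at most `B` in the integral basis
`ω` is `O_ε(B^ε)`. -/
theorem units_moving_bounded_element_count
    (K : Type*) [Field K] [NumberField K] (k : ℕ)
    (ω : Module.Basis (Fin k) ℤ (NumberField.RingOfIntegers K)) :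
    ∀ ε : ℝ, 0 < ε → ∃ C : ℝ, 0 < C ∧
      ∀ B : ℕ, 2 ≤ B → ∀ b : Fin k → ℤ, (∀ j, |b j| ≤ (B : ℤ)) →
        Algebra.norm ℤ (∑ j, b j • ω j) ≠ 0 →
        (Nat.card {u : (NumberField.RingOfIntegers K)ˣ |
            ∀ j, |ω.repr ((u : NumberField.RingOfIntegers K) * ∑ j', b j' • ω j') j| ≤ (B : ℤ)} : ℝ)
          ≤ C * (B : ℝ) ^ ε := by
  intro ε hε
  classical
  obtain ⟨A, hA1, hlog⟩ := exists_norm_logEmbedding_le_of_abs_repr_le ω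
  obtain ⟨c, hc, hcard⟩ := exists_card_setOf_norm_logEmbedding_le K
  set n : ℝ := (finrank ℚ K : ℝ)
  obtain ⟨C, hC, hgrowth⟩ := Real.exists_pow_add_mul_log_le_mul_rpow
    (a := 3 + c * (2 * (n + 1)) * Real.log A) (b := c * (2 * (n + 1)))
    (by have := Real.log_nonneg hA1; positivity) (by positivity) (rank K) hε
  refine ⟨Nat.card (torsion K) * C, mul_pos (Nat.cast_pos.mpr Nat.card_pos) hC,
    fun B hB b hb hβ ↦ ?_⟩
  have hB1 : (1 : ℝ) ≤ B := by exact_mod_cast (by omega : 1 ≤ B)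
  set R := 2 * (n + 1) * Real.log (A * B) with hR
  have hsub : {u : (𝓞 K)ˣ | ∀ j, |ω.repr ((u : 𝓞 K) * ∑ j', b j' • ω j') j| ≤ (B : ℤ)} ⊆
      {u : (𝓞 K)ˣ | ‖logEmbedding K (Additive.ofMul u)‖ ≤ R} := fun u hu ↦
    hlog (Algebra.norm_ne_zero_iff.mp hβ) u hB1
      (fun j ↦ by rw [ω.repr_sum_self]; exact_mod_cast hb j) (fun j ↦ by exact_mod_cast hu j)
  calc _ ≤ (Nat.card {u : (𝓞 K)ˣ | ‖logEmbedding K (Additive.ofMul u)‖ ≤ R} : ℝ) := by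
        exact_mod_cast Nat.card_mono (finite_setOf_norm_logEmbedding_le K R) hsub
    _ ≤ Nat.card (torsion K) * (c * R + 3) ^ rank K :=
        hcard R (by have := Real.log_nonneg (one_le_mul_of_one_le_of_one_le hA1 hB1); positivity)
    _ = Nat.card (torsion K) *
          (3 + c * (2 * (n + 1)) * Real.log A + c * (2 * (n + 1)) * Real.log B) ^ rank K := by
        rw [hR, Real.log_mul (by positivity) (by positivity)]
        ring
    _ ≤ Nat.card (torsion K) * (C * B ^ ε) := by
        gcongr
        exact hgrowth B hB1
    _ = _ := by ring
end

section
/- Let p be a prime, a ≢ 0 (mod p), and h = (h_1,h_2,h_3,h_4) ∈ ℤ^4. Then the exponential sum S = ∑ e_p(h_1x_1 + h_2x_2 + h_3x_3 + h_4x_4), over all (x_1,x_2,x_3,x_4) ∈ (ℤ/pℤ)^4 with x_1^3 + x_2^3 ≡ a(x_3^3+x_4^3) (mod p), satisfies |S| ≤ C·gcd(h_1,h_2,h_3,h_4,p)·p^2 for an absolute constant C. -/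
/-!
Detecting the congruence by a sum over `w` gives `p S = ∑_w ∏_j T(c_j w, h_j)`, where
`T(w, h) = ∑_x e_p(w x³ + h x)` and `c = (1, 1, -a, -a)`. The term `w = 0` is `p⁴` or `0`
according as `p` divides every `h_j` or not. The terms `w ≠ 0` are bounded on average rather
than by Weil's bound: by AM-GM it suffices that `∑_{w ≠ 0} |T(w, h)|⁴ ≤ 54 p³` for every `h`.
The invariance `T(w l³, h l) = T(w, h)` makes `∑_w |T(w, h)|⁴` independent of `h ≠ 0`, so it
is at most `1 / (p - 1)` times the complete fourth moment, which counts the points of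
`x₁³ - y₁³ + x₂³ - y₂³ = x₁ - y₁ + x₂ - y₂ = 0`: three planes when `p ≠ 3`. For `h = 0` the
same invariance bounds `|T(w, 0)|²` by `18 p` through the second moment. For `p = 3` the
trivial bound suffices.
-/

open Finset

lemma AddChar.map_sum_eq_prod {A M ι : Type*} [AddCommMonoid A] [CommMonoid M]
    (φ : AddChar A M) (s : Finset ι) (f : ι → A) : φ (∑ i ∈ s, f i) = ∏ i ∈ s, φ (f i) := by
  induction s using Finset.cons_induction with
  | empty => simp
  | cons i s _ ih => rw [sum_cons, AddChar.map_add_eq_mul, ih, prod_cons]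

namespace CubicWeilSum

variable {F : Type*} [Field F] [Fintype F]

local notation "q" => Fintype.card F

lemma card_filter_pow_eq_le [DecidableEq F] {k : ℕ} (hk : 0 < k) (c : F) :
    #{x : F | x ^ k = c} ≤ k := by
  calc #{x : F | x ^ k = c} ≤ #(Polynomial.nthRootsFinset k c) :=
        card_le_card fun x hx => (Polynomial.mem_nthRootsFinset hk c).mpr (mem_filter.mp hx).2
    _ ≤ Multiset.card (Polynomial.nthRoots k c) := by
        rw [Polynomial.nthRootsFinset_def]; exact Multiset.toFinset_card_le _
    _ ≤ k := Polynomial.card_nthRoots k c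

lemma sum_comp_mul_pow_le {G : F → ℝ} (hG : ∀ u, 0 ≤ G u) {k : ℕ} (hk : 0 < k) {w : F}
    (hw : w ≠ 0) : ∑ l, G (w * l ^ k) ≤ k * ∑ u, G u := by
  classical
  rw [← sum_fiberwise' univ (fun l => w * l ^ k) G, mul_sum]
  refine sum_le_sum fun u _ => ?_
  rw [sum_const, nsmul_eq_mul]
  refine mul_le_mul_of_nonneg_right ?_ (hG u)
  have hfibre : #{l ∈ univ | w * l ^ k = u} ≤ k := by
    convert card_filter_pow_eq_le hk (w⁻¹ * u) using 3 with l
    rw [eq_inv_mul_iff_mul_eq₀ hw]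
  exact_mod_cast hfibre

lemma card_sub_one_mul_le_of_forall_mul_pow {G : F → ℝ} (hG : ∀ u, 0 ≤ G u) {k : ℕ}
    (hk : 0 < k) {w : F} (hw : w ≠ 0) (hinv : ∀ l ≠ 0, G (w * l ^ k) = G w) :
    ((q : ℝ) - 1) * G w ≤ k * ∑ u, G u := by
  classical
  calc ((q : ℝ) - 1) * G w = ∑ l ∈ univ.erase 0, G (w * l ^ k) := by
        rw [sum_congr rfl fun l hl => hinv l (ne_of_mem_erase hl), sum_const,
          card_erase_of_mem (mem_univ 0), card_univ, nsmul_eq_mul,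
          Nat.cast_sub Fintype.card_pos]
        simp
    _ ≤ ∑ l, G (w * l ^ k) :=
        sum_le_sum_of_subset_of_nonneg (subset_univ _) fun l _ _ => hG _
    _ ≤ k * ∑ u, G u := sum_comp_mul_pow_le hG hk hw

lemma sum_erase_zero_comp_mul [DecidableEq F] {M : Type*} [AddCommGroup M] {c : F}
    (hc : c ≠ 0) (G : F → M) : ∑ w ∈ univ.erase 0, G (c * w) = ∑ w ∈ univ.erase 0, G w := by
  rw [sum_erase_eq_sub (mem_univ 0), sum_erase_eq_sub (mem_univ 0), mul_zero,
    Fintype.sum_bijective _ (mulLeft_bijective₀ c hc) _ G fun _ => rfl]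

lemma mul_mul_mul_le_sum_pow_four (a b c d : ℝ) :
    a * b * c * d ≤ (a ^ 4 + b ^ 4 + c ^ 4 + d ^ 4) / 4 := by
  nlinarith [sq_nonneg (a ^ 2 - b ^ 2), sq_nonneg (c ^ 2 - d ^ 2), sq_nonneg (a * b - c * d)]

lemma card_cube_eq_cube_le [DecidableEq F] :
    #{z : F × F | z.1 ^ 3 = z.2 ^ 3} ≤ 3 * q := by
  refine (card_le_mul_card_image (f := Prod.fst) _ 3 fun x _ => ?_).trans
    (Nat.mul_le_mul_left 3 (card_le_univ _))
  refine (card_le_card_of_injOn Prod.snd (t := {y : F | y ^ 3 = x ^ 3}) ?_ ?_).trans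
    (card_filter_pow_eq_le (by norm_num) _)
  · intro z hz
    simp only [coe_filter, mem_filter, mem_univ, true_and] at hz
    simp [← hz.2, hz.1]
  · intro z hz z' hz' h
    simp only [coe_filter, mem_filter, mem_univ, true_and] at hz hz'
    exact Prod.ext (hz.2.trans hz'.2.symm) h

def pairDiff (k : ℕ) (z : (F × F) × (F × F)) : F :=
  z.1.1 ^ k - z.1.2 ^ k + z.2.1 ^ k - z.2.2 ^ k

/-- The solutions lie on the three planes `y₁ = x₁`, `y₁ = x₂` and `x₁ + x₂ = 0`, because
`x₁³ - y₁³ + x₂³ - y₂³ = 3 (x₁ + x₂)(y₁ - x₁)(y₁ - x₂)` when `y₂ = x₁ - y₁ + x₂`. -/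
lemma card_pairDiff_eq_zero_le [DecidableEq F] (h3 : (3 : F) ≠ 0) :
    #{z : (F × F) × (F × F) | pairDiff 3 z = 0 ∧ pairDiff 1 z = 0} ≤ 3 * q ^ 2 := by
  let planes : Finset ((F × F) × (F × F)) :=
    univ.image (fun s : F × F => ((s.1, s.1), (s.2, s.2))) ∪
      univ.image (fun s : F × F => ((s.1, s.2), (s.2, s.1))) ∪
      univ.image (fun s : F × F => ((s.1, s.2), (-s.1, -s.2)))
  have hsub : univ.filter (fun z : (F × F) × (F × F) => pairDiff 3 z = 0 ∧ pairDiff 1 z = 0) ⊆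
      planes := by
    rintro ⟨⟨x₁, y₁⟩, ⟨x₂, y₂⟩⟩ hz
    simp only [mem_filter, mem_univ, true_and, pairDiff, pow_one] at hz
    obtain ⟨hcube, hlin⟩ := hz
    have hfactor : 3 * ((x₁ + x₂) * ((y₁ - x₁) * (y₁ - x₂))) = 0 := by
      linear_combination -hcube + ((x₁ + x₂ - y₁) ^ 2 + (x₁ + x₂ - y₁) * y₂ + y₂ ^ 2) * hlin
    simp only [planes, mem_union, mem_image, mem_univ, true_and, Prod.exists, Prod.mk.injEq]
    rcases mul_eq_zero.mp ((mul_eq_zero.mp hfactor).resolve_left h3) with hs | hy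
    · exact Or.inr ⟨x₁, y₁, ⟨rfl, rfl⟩, by linear_combination -hs,
        by linear_combination hlin - hs⟩
    rcases mul_eq_zero.mp hy with hy | hy
    · exact Or.inl (Or.inl ⟨x₁, x₂, ⟨rfl, by linear_combination -hy⟩, rfl,
        by linear_combination hlin + hy⟩)
    · exact Or.inl (Or.inr ⟨x₁, x₂, ⟨rfl, by linear_combination -hy⟩, rfl,
        by linear_combination hlin + hy⟩)
  calc #{z : (F × F) × (F × F) | pairDiff 3 z = 0 ∧ pairDiff 1 z = 0} ≤ #planes :=
        card_le_card hsub
    _ ≤ q ^ 2 + q ^ 2 + q ^ 2 := by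
      refine (card_union_le _ _).trans (add_le_add ((card_union_le _ _).trans
        (add_le_add ?_ ?_)) ?_) <;> exact (card_image_le).trans (by simp [sq])
    _ = 3 * q ^ 2 := by ring

variable (ψ : AddChar F ℂ)

def cubicSum (w h : F) : ℂ := ∑ x, ψ (w * x ^ 3 + h * x)

lemma cubicSum_mul_cube (w h : F) {l : F} (hl : l ≠ 0) :
    cubicSum ψ (w * l ^ 3) (h * l) = cubicSum ψ w h := by
  refine Fintype.sum_equiv (Equiv.mulLeft₀ l hl) _ _ fun x => ?_
  simp only [Equiv.mulLeft₀_apply]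
  ring_nf

lemma normSq_cubicSum (w h : F) :
    (Complex.normSq (cubicSum ψ w h) : ℂ) =
      ∑ z : F × F, ψ (w * (z.1 ^ 3 - z.2 ^ 3) + h * (z.1 - z.2)) := by
  rw [← Complex.mul_conj, cubicSum, map_sum, sum_mul_sum, ← univ_product_univ, sum_product]
  refine sum_congr rfl fun x _ => sum_congr rfl fun y _ => ?_
  rw [← AddChar.map_neg_eq_conj, ← AddChar.map_add_eq_mul]
  ring_nf

lemma normSq_cubicSum_sq (w h : F) :
    (Complex.normSq (cubicSum ψ w h) : ℂ) ^ 2 =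
      ∑ z : (F × F) × (F × F), ψ (w * pairDiff 3 z + h * pairDiff 1 z) := by
  rw [Fintype.sum_prod_type, sq, normSq_cubicSum, sum_mul_sum]
  refine sum_congr rfl fun z _ => sum_congr rfl fun z' _ => ?_
  rw [← AddChar.map_add_eq_mul, pairDiff, pairDiff]
  ring_nf

variable {ψ} [DecidableEq F]

lemma cubicSum_zero_left (hψ : ψ.IsPrimitive) (h : F) :
    cubicSum ψ 0 h = if h = 0 then (q : ℂ) else 0 := by
  simp only [cubicSum, zero_mul, zero_add, mul_comm h, AddChar.sum_mulShift h hψ]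
  push_cast; rfl

lemma sum_sum_addChar_mul {ι : Type*} [Fintype ι] (hψ : ψ.IsPrimitive) (f : ι → F) :
    ∑ w, ∑ i, ψ (w * f i) = q * #{i | f i = 0} := by
  rw [sum_comm]
  simp [AddChar.sum_mulShift _ hψ, sum_ite, mul_comm]

lemma sum_sum_sum_addChar_mul_add {ι : Type*} [Fintype ι] (hψ : ψ.IsPrimitive) (f g : ι → F) :
    ∑ w, ∑ h, ∑ i, ψ (w * f i + h * g i) = q ^ 2 * #{i | f i = 0 ∧ g i = 0} := by
  have hsplit : ∀ i, ∑ w, ∑ h, ψ (w * f i + h * g i) =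
      (∑ w, ψ (w * f i)) * ∑ h, ψ (h * g i) := fun i => by
    simp_rw [AddChar.map_add_eq_mul, sum_mul_sum]
  rw [sum_congr rfl fun w _ => sum_comm, sum_comm]
  simp [hsplit, AddChar.sum_mulShift _ hψ, sum_ite, filter_filter, and_comm, mul_comm, sq]

lemma sum_normSq_cubicSum_zero_le (hψ : ψ.IsPrimitive) :
    ∑ w, Complex.normSq (cubicSum ψ w 0) ≤ 3 * (q : ℝ) ^ 2 := by
  have hcount : ∑ w, Complex.normSq (cubicSum ψ w 0) = q * #{z : F × F | z.1 ^ 3 = z.2 ^ 3} := by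
    apply Complex.ofReal_injective
    push_cast
    simp_rw [normSq_cubicSum, zero_mul, add_zero, sum_sum_addChar_mul hψ, sub_eq_zero]
  rw [hcount]
  calc (q : ℝ) * #{z : F × F | z.1 ^ 3 = z.2 ^ 3} ≤ q * (3 * q) := by
        gcongr; exact_mod_cast card_cube_eq_cube_le (F := F)
    _ = 3 * (q : ℝ) ^ 2 := by ring

lemma sum_sum_normSq_cubicSum_sq_le (hψ : ψ.IsPrimitive) (h3 : (3 : F) ≠ 0) :
    ∑ w, ∑ h, Complex.normSq (cubicSum ψ w h) ^ 2 ≤ 3 * (q : ℝ) ^ 4 := by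
  have hcount : ∑ w, ∑ h, Complex.normSq (cubicSum ψ w h) ^ 2 =
      q ^ 2 * #{z : (F × F) × (F × F) | pairDiff 3 z = 0 ∧ pairDiff 1 z = 0} := by
    apply Complex.ofReal_injective
    push_cast
    simp_rw [normSq_cubicSum_sq, sum_sum_sum_addChar_mul_add hψ]
  rw [hcount]
  calc (q : ℝ) ^ 2 * #{z : (F × F) × (F × F) | pairDiff 3 z = 0 ∧ pairDiff 1 z = 0}
      ≤ q ^ 2 * (3 * q ^ 2) := by
        gcongr; exact_mod_cast card_pairDiff_eq_zero_le h3
    _ = 3 * (q : ℝ) ^ 4 := by ring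

lemma normSq_cubicSum_zero_le (hψ : ψ.IsPrimitive) {w : F} (hw : w ≠ 0) :
    Complex.normSq (cubicSum ψ w 0) ≤ 18 * q := by
  have hinv : ∀ l ≠ (0 : F), Complex.normSq (cubicSum ψ (w * l ^ 3) 0) =
      Complex.normSq (cubicSum ψ w 0) := fun l hl => by
    rw [← cubicSum_mul_cube ψ w 0 hl, zero_mul]
  have hmass := card_sub_one_mul_le_of_forall_mul_pow
    (G := fun u => Complex.normSq (cubicSum ψ u 0)) (fun u => Complex.normSq_nonneg _)
    (by norm_num : 0 < 3) hw hinv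
  have hq : (2 : ℝ) ≤ q := by exact_mod_cast Fintype.one_lt_card (α := F)
  have hq' : 9 * (q : ℝ) ^ 2 ≤ (q - 1) * (18 * q) := by nlinarith
  refine le_of_mul_le_mul_left ?_ (by linarith : (0 : ℝ) < q - 1)
  push_cast at hmass
  linarith [sum_normSq_cubicSum_zero_le hψ]

lemma sum_normSq_cubicSum_sq_le (hψ : ψ.IsPrimitive) (h3 : (3 : F) ≠ 0) {h : F}
    (hh : h ≠ 0) :
    ∑ w, Complex.normSq (cubicSum ψ w h) ^ 2 ≤ 6 * (q : ℝ) ^ 3 := by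
  have hinv : ∀ l ≠ (0 : F), ∑ w, Complex.normSq (cubicSum ψ w (h * l ^ 1)) ^ 2 =
      ∑ w, Complex.normSq (cubicSum ψ w h) ^ 2 := fun l hl => by
    rw [pow_one]
    exact (Fintype.sum_bijective _ (mulRight_bijective₀ _ (pow_ne_zero 3 hl)) _ _
      fun w => by rw [cubicSum_mul_cube ψ w h hl]).symm
  have hmass := card_sub_one_mul_le_of_forall_mul_pow
    (fun m => sum_nonneg fun w _ => sq_nonneg (Complex.normSq (cubicSum ψ w m)))
    (by norm_num : 0 < 1) hh hinv
  rw [sum_comm, Nat.cast_one, one_mul] at hmass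
  have hq : (2 : ℝ) ≤ q := by exact_mod_cast Fintype.one_lt_card (α := F)
  have hq' : 3 * (q : ℝ) ^ 4 ≤ (q - 1) * (6 * q ^ 3) := by
    nlinarith [pow_nonneg (by linarith : (0 : ℝ) ≤ q) 3]
  refine le_of_mul_le_mul_left ?_ (by linarith : (0 : ℝ) < q - 1)
  linarith [sum_sum_normSq_cubicSum_sq_le hψ h3]

lemma sum_erase_zero_norm_cubicSum_pow_four_le (hψ : ψ.IsPrimitive) (h3 : (3 : F) ≠ 0)
    (h : F) :
    ∑ w ∈ univ.erase 0, ‖cubicSum ψ w h‖ ^ 4 ≤ 54 * (q : ℝ) ^ 3 := by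
  simp_rw [show ∀ z : ℂ, ‖z‖ ^ 4 = Complex.normSq z ^ 2 by
    simp [Complex.normSq_eq_norm_sq, ← pow_mul]]
  rcases eq_or_ne h 0 with rfl | hh
  · calc ∑ w ∈ univ.erase 0, Complex.normSq (cubicSum ψ w 0) ^ 2
        ≤ ∑ w ∈ univ.erase 0, 18 * q * Complex.normSq (cubicSum ψ w 0) := by
          refine sum_le_sum fun w hw => ?_
          rw [sq]
          gcongr
          · exact Complex.normSq_nonneg _
          · exact normSq_cubicSum_zero_le hψ (ne_of_mem_erase hw)
      _ ≤ 18 * q * ∑ w, Complex.normSq (cubicSum ψ w 0) := by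
          rw [← mul_sum]
          gcongr
          exacts [fun w _ _ => Complex.normSq_nonneg _, subset_univ _]
      _ ≤ 18 * q * (3 * q ^ 2) := by gcongr; exact sum_normSq_cubicSum_zero_le hψ
      _ = 54 * (q : ℝ) ^ 3 := by ring
  · calc ∑ w ∈ univ.erase 0, Complex.normSq (cubicSum ψ w h) ^ 2
        ≤ ∑ w, Complex.normSq (cubicSum ψ w h) ^ 2 :=
          sum_le_sum_of_subset_of_nonneg (subset_univ _) fun w _ _ => sq_nonneg _
      _ ≤ 6 * q ^ 3 := sum_normSq_cubicSum_sq_le hψ h3 hh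
      _ ≤ 54 * (q : ℝ) ^ 3 := by gcongr; norm_num

lemma sum_erase_zero_norm_prod_cubicSum_le (hψ : ψ.IsPrimitive) (h3 : (3 : F) ≠ 0)
    {c : Fin 4 → F} (hc : ∀ j, c j ≠ 0) (b : Fin 4 → F) :
    ∑ w ∈ univ.erase 0, ‖∏ j, cubicSum ψ (c j * w) (b j)‖ ≤ 54 * (q : ℝ) ^ 3 := by
  calc ∑ w ∈ univ.erase 0, ‖∏ j, cubicSum ψ (c j * w) (b j)‖
      ≤ ∑ w ∈ univ.erase 0, (∑ j, ‖cubicSum ψ (c j * w) (b j)‖ ^ 4) / 4 := by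
        refine sum_le_sum fun w _ => ?_
        rw [norm_prod, Fin.prod_univ_four, Fin.sum_univ_four]
        exact mul_mul_mul_le_sum_pow_four _ _ _ _
    _ = (∑ j, ∑ w ∈ univ.erase 0, ‖cubicSum ψ w (b j)‖ ^ 4) / 4 := by
        rw [← sum_div, sum_comm]
        exact congrArg (· / 4) (sum_congr rfl fun j _ =>
          sum_erase_zero_comp_mul (hc j) fun w => ‖cubicSum ψ w (b j)‖ ^ 4)
    _ ≤ (∑ _j : Fin 4, 54 * (q : ℝ) ^ 3) / 4 := by
        gcongr with j; exact sum_erase_zero_norm_cubicSum_pow_four_le hψ h3 (b j)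
    _ = 54 * (q : ℝ) ^ 3 := by rw [sum_const, card_univ, Fintype.card_fin]; ring

variable (ψ) in
def diagonalCubicSum {n : ℕ} (c b : Fin n → F) : ℂ :=
  ∑ x : Fin n → F, if ∑ j, c j * x j ^ 3 = 0 then ψ (∑ j, b j * x j) else 0

lemma card_mul_diagonalCubicSum (hψ : ψ.IsPrimitive) {n : ℕ} (c b : Fin n → F) :
    (q : ℂ) * diagonalCubicSum ψ c b = ∑ w, ∏ j, cubicSum ψ (c j * w) (b j) := by
  have hexpand : ∀ w (x : Fin n → F), ∏ j, ψ (c j * w * x j ^ 3 + b j * x j) =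
      ψ (w * ∑ j, c j * x j ^ 3) * ψ (∑ j, b j * x j) := fun w x => by
    rw [← AddChar.map_add_eq_mul, ← AddChar.map_sum_eq_prod, mul_sum, ← sum_add_distrib]
    exact congrArg ψ (sum_congr rfl fun j _ => by ring)
  simp_rw [cubicSum, Fintype.prod_sum, hexpand]
  rw [sum_comm, diagonalCubicSum, mul_sum]
  refine sum_congr rfl fun x _ => ?_
  rw [← sum_mul, AddChar.sum_mulShift _ hψ]
  split_ifs <;> simp

lemma norm_diagonalCubicSum_le {n : ℕ} (c b : Fin n → F) :
    ‖diagonalCubicSum ψ c b‖ ≤ (q : ℝ) ^ n := by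
  refine (norm_sum_le _ _).trans ?_
  calc ∑ x : Fin n → F, ‖if ∑ j, c j * x j ^ 3 = 0 then ψ (∑ j, b j * x j) else 0‖
      ≤ ∑ _x : Fin n → F, (1 : ℝ) := sum_le_sum fun x _ => by split_ifs <;> simp
    _ = (q : ℝ) ^ n := by simp

lemma norm_prod_cubicSum_zero_left (hψ : ψ.IsPrimitive) {n : ℕ} (b : Fin n → F) :
    ‖∏ j, cubicSum ψ 0 (b j)‖ = if ∀ j, b j = 0 then (q : ℝ) ^ n else 0 := by
  split_ifs with hb
  · simp [cubicSum_zero_left hψ, hb]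
  · obtain ⟨j, hj⟩ := not_forall.mp hb
    rw [prod_eq_zero (mem_univ j) (by rw [cubicSum_zero_left hψ, if_neg hj]), norm_zero]

lemma card_mul_norm_diagonalCubicSum_le (hψ : ψ.IsPrimitive) (h3 : (3 : F) ≠ 0)
    {c : Fin 4 → F} (hc : ∀ j, c j ≠ 0) (b : Fin 4 → F) :
    q * ‖diagonalCubicSum ψ c b‖ ≤ ‖∏ j, cubicSum ψ 0 (b j)‖ + 54 * (q : ℝ) ^ 3 := by
  calc q * ‖diagonalCubicSum ψ c b‖ = ‖∑ w, ∏ j, cubicSum ψ (c j * w) (b j)‖ := by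
        rw [← card_mul_diagonalCubicSum hψ, norm_mul, Complex.norm_natCast]
    _ = ‖∏ j, cubicSum ψ 0 (b j) +
          ∑ w ∈ univ.erase 0, ∏ j, cubicSum ψ (c j * w) (b j)‖ := by
        rw [← add_sum_erase _ _ (mem_univ 0)]
        simp_rw [mul_zero]
    _ ≤ ‖∏ j, cubicSum ψ 0 (b j)‖ +
          ∑ w ∈ univ.erase 0, ‖∏ j, cubicSum ψ (c j * w) (b j)‖ :=
        (norm_add_le _ _).trans (add_le_add_right (norm_sum_le _ _) _)
    _ ≤ ‖∏ j, cubicSum ψ 0 (b j)‖ + 54 * (q : ℝ) ^ 3 := by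
        gcongr; exact sum_erase_zero_norm_prod_cubicSum_le hψ h3 hc b

end CubicWeilSum

open CubicWeilSum

lemma sum_ite_exp_eq_diagonalCubicSum {p : ℕ} [Fact p.Prime] (a : ZMod p) (h : Fin 4 → ℤ) :
    ∑ x : Fin 4 → ZMod p,
        (if x 0 ^ 3 + x 1 ^ 3 = a * (x 2 ^ 3 + x 3 ^ 3) then
          Complex.exp (2 * Real.pi * Complex.I *
            ((∑ j, h j * ((x j).val : ℤ) : ℤ) : ℂ) / (p : ℂ))
        else 0) =
      diagonalCubicSum ZMod.stdAddChar ![1, 1, -a, -a] fun j => (h j : ZMod p) := by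
  refine sum_congr rfl fun x _ => ?_
  have hcond : x 0 ^ 3 + x 1 ^ 3 = a * (x 2 ^ 3 + x 3 ^ 3) ↔
      ∑ j, (![1, 1, -a, -a] : Fin 4 → ZMod p) j * x j ^ 3 = 0 := by
    simp only [Fin.sum_univ_four, Matrix.cons_val]
    constructor <;> intro hx <;> linear_combination hx
  rw [← ZMod.stdAddChar_coe]
  push_cast
  simp_rw [ZMod.natCast_val, ZMod.cast_id', id, hcond]

lemma gcd_four_natCast_pos {p : ℕ} (hp : 0 < p) (h : Fin 4 → ℤ) :
    0 < Int.gcd (h 0) (Int.gcd (h 1) (Int.gcd (h 2) (Int.gcd (h 3) (p : ℤ)))) := by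
  simp [Nat.pos_iff_ne_zero, Int.gcd_eq_zero_iff, hp.ne']

lemma le_gcd_four_natCast {p : ℕ} (hp : 0 < p) (h : Fin 4 → ℤ) (hdvd : ∀ j, (p : ℤ) ∣ h j) :
    p ≤ Int.gcd (h 0) (Int.gcd (h 1) (Int.gcd (h 2) (Int.gcd (h 3) (p : ℤ)))) :=
  Nat.le_of_dvd (gcd_four_natCast_pos hp h) <|
    Int.dvd_gcd (hdvd 0) <| Int.dvd_coe_gcd (hdvd 1) <| Int.dvd_coe_gcd (hdvd 2) <|
      Int.dvd_coe_gcd (hdvd 3) dvd_rfl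

lemma norm_prod_cubicSum_zero_left_le_gcd_mul {p : ℕ} [Fact p.Prime] (h : Fin 4 → ℤ) :
    ‖∏ j, cubicSum ZMod.stdAddChar 0 (h j : ZMod p)‖ ≤
      Int.gcd (h 0) (Int.gcd (h 1) (Int.gcd (h 2) (Int.gcd (h 3) (p : ℤ)))) * (p : ℝ) ^ 3 := by
  have hp0 : 0 < p := (Fact.out : p.Prime).pos
  rw [norm_prod_cubicSum_zero_left (ZMod.isPrimitive_stdAddChar p), ZMod.card]
  split_ifs with hb
  · have hpg := le_gcd_four_natCast hp0 h fun j =>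
      (ZMod.intCast_zmod_eq_zero_iff_dvd _ p).mp (hb j)
    calc (p : ℝ) ^ 4 = p * p ^ 3 := by ring
      _ ≤ _ := by gcongr
  · positivity

/-- Weil-type bound for the exponential sum over the variety
`x₁³ + x₂³ ≡ a(x₃³ + x₄³) (mod p)`, `a ≢ 0`:
`|S(a,h;p)| ≤ C·gcd(h₁,h₂,h₃,h₄,p)·p²`. -/
theorem exp_sum_cubic_fourfold_bound :
    ∃ C : ℝ, 0 < C ∧ ∀ (p : ℕ) [Fact p.Prime] (a : ZMod p), a ≠ 0 → ∀ h : Fin 4 → ℤ,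
      ‖∑ x : Fin 4 → ZMod p,
          (if x 0 ^ 3 + x 1 ^ 3 = a * (x 2 ^ 3 + x 3 ^ 3) then
            Complex.exp (2 * Real.pi * Complex.I *
              ((∑ j, h j * ((x j).val : ℤ) : ℤ) : ℂ) / (p : ℂ))
          else 0)‖
        ≤ C * (Int.gcd (h 0) (Int.gcd (h 1) (Int.gcd (h 2) (Int.gcd (h 3) (p : ℤ)))) : ℝ)
            * (p : ℝ) ^ 2 := by
  refine ⟨55, by norm_num, fun p _ a ha h => ?_⟩
  rw [sum_ite_exp_eq_diagonalCubicSum]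
  set S := diagonalCubicSum ZMod.stdAddChar ![1, 1, -a, -a] fun j => (h j : ZMod p)
  set g := Int.gcd (h 0) (Int.gcd (h 1) (Int.gcd (h 2) (Int.gcd (h 3) (p : ℤ))))
  have hp : (2 : ℝ) ≤ p := by exact_mod_cast (Fact.out : p.Prime).two_le
  have hg : (1 : ℝ) ≤ g := by exact_mod_cast gcd_four_natCast_pos (Fact.out : p.Prime).pos h
  by_cases h3 : (3 : ZMod p) = 0
  · have hp3 : (p : ℝ) ≤ 3 := by
      exact_mod_cast Nat.le_of_dvd (by norm_num)
        ((ZMod.natCast_eq_zero_iff 3 p).mp (by exact_mod_cast h3))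
    calc ‖S‖ ≤ (p : ℝ) ^ 2 * p ^ 2 := by
          simpa [← pow_add] using norm_diagonalCubicSum_le (F := ZMod p) (n := 4) _ _
      _ ≤ 9 * (p : ℝ) ^ 2 := by gcongr; nlinarith
      _ ≤ 55 * g * (p : ℝ) ^ 2 := by gcongr; linarith
  have hc : ∀ j, (![1, 1, -a, -a] : Fin 4 → ZMod p) j ≠ 0 := by
    intro j; fin_cases j <;> simp [ha]
  have hmain := card_mul_norm_diagonalCubicSum_le (ZMod.isPrimitive_stdAddChar p) h3 hc
    fun j => (h j : ZMod p)
  rw [ZMod.card] at hmain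
  refine le_of_mul_le_mul_left ?_ (by linarith : (0 : ℝ) < p)
  calc (p : ℝ) * ‖S‖ ≤ g * p ^ 3 + 54 * p ^ 3 := by
        linarith [norm_prod_cubicSum_zero_left_le_gcd_mul (p := p) h]
    _ ≤ p * (55 * g * p ^ 2) := by nlinarith [pow_nonneg (by linarith : (0 : ℝ) ≤ p) 3]
end

section
/- For z_1, z_2 ∈ ℤ[i] with |z_1|^2, |z_2|^2 ≤ 2N, write z_j = r_j + i s_j and Δ = Im(z_2 · conj(z_1)) = r_2 s_1 − r_1 s_2. Then for any fixed nonzero integer D, the number of pairs (z_1, z_2) with |z_1|^2, |z_2|^2 in (N, 2N] and Δ = D is at most C·N·(log N)^{O(1)}. -/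
/-!
Fix `z₁` with `N < |z₁|² ≤ 2N` and write `g = gcd(Re z₁, Im z₁)`. A Gaussian integer `z₂` is
determined by `z₁ · conj z₂`; when its imaginary part is fixed, its real part lies in `[-2N, 2N]`
and two admissible values differ by a multiple of `|z₁|² / g > N / g`, so there are at most `4g`
choices of `z₂`. Summing `gcd(a, b) ≤ ∑_{d ∣ a, d ∣ b} d` over the square `|a|, |b| ≤ M = ⌊√(2N)⌋`
gives `∑_{d ≤ M} d · (3M/d)² = 9 M² H_M = O(N log N)`.
-/

open Finset

theorem card_sub_one_mul_le_of_dvd_mul_sub {s : Finset ℤ} {a b g n : ℤ} (hab : a ≤ b)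
    (hg : 0 < g) (hn : 0 < n) (hs : s ⊆ Icc a b) (hdvd : ∀ x ∈ s, ∀ y ∈ s, n ∣ g * (x - y)) :
    (#s - 1 : ℤ) * n ≤ g * (b - a) := by
  set K := g * (b - a) / n
  have hmaps : Set.MapsTo (fun x => g * (x - a) / n) s (Icc 0 K) := by
    intro x hx
    obtain ⟨hax, hxb⟩ := mem_Icc.mp (hs hx)
    exact mem_Icc.mpr ⟨Int.ediv_nonneg (mul_nonneg hg.le (by linarith)) hn.le,
      Int.ediv_le_ediv hn (mul_le_mul_of_nonneg_left (by linarith) hg.le)⟩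
  have hinj : Set.InjOn (fun x => g * (x - a) / n) s := by
    intro x hx y hy hxy
    have hmod : g * (y - a) % n = g * (x - a) % n :=
      (Int.modEq_iff_dvd.mpr (by simpa [mul_sub] using hdvd x hx y hy)).eq
    have hgxy : g * (x - a) = g * (y - a) := by
      rw [← Int.mul_ediv_add_emod (g * (x - a)) n, ← Int.mul_ediv_add_emod (g * (y - a)) n,
        show g * (x - a) / n = g * (y - a) / n from hxy, hmod]
    linarith [mul_left_cancel₀ hg.ne' hgxy]
  have hcard : (#s : ℤ) ≤ K + 1 := by
    have := card_le_card_of_injOn _ hmaps hinj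
    have hK : 0 ≤ K := Int.ediv_nonneg (mul_nonneg hg.le (by linarith)) hn.le
    rw [Int.card_Icc] at this
    omega
  calc (#s - 1 : ℤ) * n ≤ K * n := by gcongr; linarith
    _ ≤ g * (b - a) := Int.ediv_mul_le _ hn.ne'

theorem card_filter_dvd_Icc_mul_le {M d : ℕ} (hd : 0 < d) (hdM : d ≤ M) :
    (#{x ∈ Icc (-M : ℤ) M | (d : ℤ) ∣ x} : ℝ) * d ≤ 3 * M := by
  have h := card_sub_one_mul_le_of_dvd_mul_sub (s := {x ∈ Icc (-M : ℤ) M | (d : ℤ) ∣ x})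
    (g := 1) (by omega) one_pos (Int.natCast_pos.mpr hd) (filter_subset _ _)
    (fun x hx y hy => by simpa using dvd_sub (mem_filter.mp hx).2 (mem_filter.mp hy).2)
  have hdM' : (d : ℝ) ≤ M := by exact_mod_cast hdM
  have : ((#{x ∈ Icc (-M : ℤ) M | (d : ℤ) ∣ x} : ℤ) : ℝ) * d ≤ 2 * M + d := by
    exact_mod_cast (by linarith : _)
  push_cast at this
  linarith

theorem gcd_le_sum_filter_dvd {M : ℕ} {a b : ℤ} (ha : a.natAbs ≤ M) (hb : b.natAbs ≤ M) :
    (Int.gcd a b : ℝ) ≤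
      ∑ d ∈ (Icc 1 M).filter (fun d : ℕ => (d : ℤ) ∣ a ∧ (d : ℤ) ∣ b), (d : ℝ) := by
  rcases Nat.eq_zero_or_pos (Int.gcd a b) with h0 | hpos
  · rw [h0, Nat.cast_zero]
    exact sum_nonneg fun d _ => Nat.cast_nonneg d
  have hle : Int.gcd a b ≤ M := by
    rcases Int.gcd_pos_iff.mp hpos with h | h
    · exact (Int.gcd_le_natAbs_left b h).trans ha
    · exact (Int.gcd_le_natAbs_right a h).trans hb
  refine single_le_sum (f := fun d : ℕ => (d : ℝ)) (fun _ _ => Nat.cast_nonneg _) ?_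
  exact mem_filter.mpr ⟨mem_Icc.mpr ⟨hpos, hle⟩, Int.gcd_dvd_left a b, Int.gcd_dvd_right a b⟩

namespace GaussianInt

theorem im_mul_star (z w : GaussianInt) : (z * star w).im = w.re * z.im - z.re * w.im := by
  simp only [Zsqrtd.im_mul, Zsqrtd.re_star, Zsqrtd.im_star]
  ring

theorem sq_re_le_norm (z : GaussianInt) : z.re ^ 2 ≤ z.norm := by
  rw [Zsqrtd.norm_def]
  nlinarith [mul_self_nonneg z.im]

theorem sq_im_le_norm (z : GaussianInt) : z.im ^ 2 ≤ z.norm := by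
  rw [Zsqrtd.norm_def]
  nlinarith [mul_self_nonneg z.re]

theorem gcd_re_im_pos {z : GaussianInt} (hz : z ≠ 0) : 0 < Int.gcd z.re z.im :=
  Int.gcd_pos_iff.mpr (not_and_or.mp fun h => hz (Zsqrtd.ext h.1 h.2))

-- `star z * (z * t) = z.norm * t` makes `z.re * (z * t).re` and `z.im * (z * t).re` multiples of
-- `z.norm`, and Bézout combines them.
theorem norm_dvd_gcd_mul_re_of_im_mul_eq_zero {z t : GaussianInt} (h : (z * t).im = 0) :
    z.norm ∣ Int.gcd z.re z.im * (z * t).re := by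
  simp only [Zsqrtd.im_mul] at h
  have hre : z.norm ∣ z.re * (z * t).re :=
    ⟨t.re, by simp only [Zsqrtd.re_mul, Zsqrtd.norm_def]; linear_combination (-z.im) * h⟩
  have him : z.norm ∣ z.im * (z * t).re :=
    ⟨-t.im, by simp only [Zsqrtd.re_mul, Zsqrtd.norm_def]; linear_combination z.re * h⟩
  rw [Int.gcd_eq_gcd_ab z.re z.im, add_mul, mul_right_comm, mul_right_comm z.im]
  exact dvd_add (dvd_mul_of_dvd_left hre _) (dvd_mul_of_dvd_left him _)

theorem card_sub_one_mul_norm_le {z : GaussianInt} (hz : z ≠ 0) {s : Finset GaussianInt}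
    {B D : ℤ} (hB : 0 ≤ B) (hs : ∀ w ∈ s, (z * star w).im = D ∧ |(z * star w).re| ≤ B) :
    (#s - 1 : ℤ) * z.norm ≤ Int.gcd z.re z.im * (2 * B) := by
  set f : GaussianInt → ℤ := fun w => (z * star w).re
  have hinj : Set.InjOn f s := by
    intro w hw w' hw' h
    have : z * star w = z * star w' := Zsqrtd.ext h ((hs w hw).1.trans (hs w' hw').1.symm)
    exact star_injective (mul_left_cancel₀ hz this)
  rw [← card_image_of_injOn hinj]
  refine (card_sub_one_mul_le_of_dvd_mul_sub (a := -B) (b := B) (by linarith)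
    (Int.natCast_pos.mpr (gcd_re_im_pos hz)) (norm_pos.mpr hz) ?_ ?_).trans_eq (by ring)
  · intro x hx
    obtain ⟨w, hw, rfl⟩ := mem_image.mp hx
    exact mem_Icc.mpr (abs_le.mp (hs w hw).2)
  · simp only [mem_image]
    rintro _ ⟨w, hw, rfl⟩ _ ⟨w', hw', rfl⟩
    have him : (z * star (w - w')).im = 0 := by
      have := (hs w hw).1.trans (hs w' hw').1.symm
      simp only [star_sub, mul_sub, Zsqrtd.im_sub] at this ⊢
      linarith
    have hre : f w - f w' = (z * star (w - w')).re := by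
      simp only [f, star_sub, mul_sub, Zsqrtd.re_sub]
    rw [hre]
    exact norm_dvd_gcd_mul_re_of_im_mul_eq_zero him

noncomputable def box (M : ℕ) : Finset GaussianInt :=
  (Icc (-M : ℤ) M ×ˢ Icc (-M : ℤ) M).map
    ⟨fun p => ⟨p.1, p.2⟩, fun _ _ h => Prod.ext (congrArg Zsqrtd.re h) (congrArg Zsqrtd.im h)⟩

theorem sum_gcd_box_le (M : ℕ) :
    ∑ z ∈ box M, (Int.gcd z.re z.im : ℝ) ≤ 9 * M ^ 2 * (1 + Real.log M) := by
  set I := Icc (-M : ℤ) M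
  have hI : ∀ x ∈ I, x.natAbs ≤ M := fun x hx => by
    have := mem_Icc.mp hx
    omega
  rw [box, sum_map]
  calc ∑ p ∈ I ×ˢ I, (Int.gcd p.1 p.2 : ℝ)
      ≤ ∑ p ∈ I ×ˢ I,
          ∑ d ∈ (Icc 1 M).filter (fun d : ℕ => (d : ℤ) ∣ p.1 ∧ (d : ℤ) ∣ p.2), (d : ℝ) :=
        sum_le_sum fun p hp => gcd_le_sum_filter_dvd (hI _ (mem_product.mp hp).1)
          (hI _ (mem_product.mp hp).2)
    _ = ∑ d ∈ Icc 1 M, (#{x ∈ I | (d : ℤ) ∣ x} : ℝ) ^ 2 * d := by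
        simp_rw [sum_filter]
        rw [sum_comm]
        refine sum_congr rfl fun d _ => ?_
        rw [← sum_filter, filter_product, sum_const, card_product, nsmul_eq_mul]
        push_cast
        ring
    _ ≤ ∑ d ∈ Icc 1 M, 9 * M ^ 2 * (d : ℝ)⁻¹ := by
        refine sum_le_sum fun d hd => ?_
        obtain ⟨hd1, hdM⟩ := mem_Icc.mp hd
        have hd0 : (0 : ℝ) < d := by exact_mod_cast hd1
        calc (#{x ∈ I | (d : ℤ) ∣ x} : ℝ) ^ 2 * d
            = (#{x ∈ I | (d : ℤ) ∣ x} * d) ^ 2 * (d : ℝ)⁻¹ := by field_simp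
          _ ≤ (3 * M) ^ 2 * (d : ℝ)⁻¹ := by
              gcongr ?_ ^ 2 * _
              exact card_filter_dvd_Icc_mul_le hd1 hdM
          _ = 9 * M ^ 2 * (d : ℝ)⁻¹ := by ring
    _ = 9 * M ^ 2 * (harmonic M : ℝ) := by
        rw [← mul_sum, harmonic_eq_sum_Icc]
        push_cast
        rfl
    _ ≤ 9 * M ^ 2 * (1 + Real.log M) := by
        gcongr
        exact harmonic_le_one_add_log M

noncomputable def annulus (N : ℕ) : Finset GaussianInt :=
  {z ∈ box (Nat.sqrt (2 * N)) | (N : ℤ) < z.norm ∧ z.norm ≤ 2 * N}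

theorem annulus_subset_box (N : ℕ) : annulus N ⊆ box (Nat.sqrt (2 * N)) :=
  filter_subset _ _

theorem mem_annulus {N : ℕ} {z : GaussianInt} :
    z ∈ annulus N ↔ (N : ℤ) < z.norm ∧ z.norm ≤ 2 * N := by
  have hcoord : ∀ x : ℤ, x ^ 2 ≤ z.norm → z.norm ≤ 2 * N →
      x ∈ Icc (-(Nat.sqrt (2 * N) : ℤ)) (Nat.sqrt (2 * N)) := by
    intro x hx hz
    have : x.natAbs ≤ Nat.sqrt (2 * N) := Nat.le_sqrt'.mpr (by zify; rw [sq_abs]; linarith)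
    exact mem_Icc.mpr ⟨by omega, by omega⟩
  simp only [annulus, box, mem_filter, mem_map, mem_product]
  exact ⟨fun h => h.2, fun h => ⟨⟨(z.re, z.im),
    ⟨hcoord _ (sq_re_le_norm z) h.2, hcoord _ (sq_im_le_norm z) h.2⟩, rfl⟩, h⟩⟩

theorem card_filter_im_mul_star_eq_le {N : ℕ} {z : GaussianInt} (hz : z ∈ annulus N) (D : ℤ) :
    #{w ∈ annulus N | (z * star w).im = D} ≤ 4 * Int.gcd z.re z.im := by
  obtain ⟨hNz, hz2N⟩ := mem_annulus.mp hz
  have hz0 : z ≠ 0 := norm_pos.mp (by omega)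
  have hbound : ∀ w ∈ {w ∈ annulus N | (z * star w).im = D},
      (z * star w).im = D ∧ |(z * star w).re| ≤ 2 * N := by
    intro w hw
    obtain ⟨hw, hD⟩ := mem_filter.mp hw
    obtain ⟨hNw, hw2N⟩ := mem_annulus.mp hw
    refine ⟨hD, abs_le_of_sq_le_sq ?_ (by positivity)⟩
    calc (z * star w).re ^ 2 ≤ (z * star w).norm := sq_re_le_norm _
      _ = z.norm * w.norm := by rw [Zsqrtd.norm_mul, Zsqrtd.norm_conj]
      _ ≤ (2 * N) ^ 2 := by nlinarith
  have h := card_sub_one_mul_norm_le hz0 (by positivity) hbound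
  have hg : (0 : ℤ) < Int.gcd z.re z.im := Int.natCast_pos.mpr (gcd_re_im_pos hz0)
  have : (#{w ∈ annulus N | (z * star w).im = D} - 1 : ℤ) < 4 * Int.gcd z.re z.im := by
    refine lt_of_mul_lt_mul_right ?_ (norm_pos.mpr hz0).le
    calc _ ≤ _ := h
      _ = 4 * Int.gcd z.re z.im * N := by ring
      _ < 4 * Int.gcd z.re z.im * z.norm := by gcongr
  omega

theorem card_filter_product_le_sum_gcd (N : ℕ) (D : ℤ) :
    #{p ∈ annulus N ×ˢ annulus N | (p.1 * star p.2).im = D} ≤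
      4 * ∑ z ∈ annulus N, Int.gcd z.re z.im := by
  rw [card_filter, sum_product, mul_sum]
  refine sum_le_sum fun z hz => ?_
  rw [← card_filter]
  exact card_filter_im_mul_star_eq_le hz D

end GaussianInt

theorem sq_mul_one_add_log_le {M N : ℕ} (hN : 2 ≤ N) (hM : M ^ 2 ≤ 2 * N) :
    (M : ℝ) ^ 2 * (1 + Real.log M) ≤ 6 * N * Real.log N := by
  have hNR : (2 : ℝ) ≤ N := by exact_mod_cast hN
  have hMR : (M : ℝ) ^ 2 ≤ 2 * N := by exact_mod_cast hM
  have hlog2 : 1 / 2 < Real.log 2 := by linarith [Real.log_two_gt_d9]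
  have hlogN : Real.log 2 ≤ Real.log N := Real.log_le_log (by norm_num) hNR
  have hlogM : Real.log M ≤ Real.log N := by
    rcases M.eq_zero_or_pos with h0 | hpos
    · rw [h0, Nat.cast_zero, Real.log_zero]
      linarith
    · refine Real.log_le_log (by exact_mod_cast hpos) ?_
      nlinarith
  calc (M : ℝ) ^ 2 * (1 + Real.log M) ≤ (2 * N) * (3 * Real.log N) := by
        gcongr; linarith
    _ = 6 * N * Real.log N := by ring

/-- The number of pairs of Gaussian integers `z₁, z₂` with `|z₁|², |z₂|² ∈ (N, 2N]`
and `Δ = Im(z₂ · conj z₁) = r₂s₁ − r₁s₂` equal to a fixed nonzero `D` is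
`≤ C·N·(log N)^{O(1)}`. -/
theorem gaussian_pairs_fixed_delta_count :
    ∃ C : ℝ, 0 < C ∧ ∃ K : ℕ, ∀ N : ℕ, 2 ≤ N → ∀ D : ℤ, D ≠ 0 →
      (Nat.card {z : GaussianInt × GaussianInt |
          (N : ℤ) < Zsqrtd.norm z.1 ∧ Zsqrtd.norm z.1 ≤ 2 * N ∧
          (N : ℤ) < Zsqrtd.norm z.2 ∧ Zsqrtd.norm z.2 ≤ 2 * N ∧
          Zsqrtd.re z.2 * Zsqrtd.im z.1 - Zsqrtd.re z.1 * Zsqrtd.im z.2 = D} : ℝ)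
        ≤ C * N * (Real.log N) ^ K := by
  refine ⟨216, by norm_num, 1, fun N hN D _ => ?_⟩
  set M := Nat.sqrt (2 * N)
  have hset : {z : GaussianInt × GaussianInt |
      (N : ℤ) < Zsqrtd.norm z.1 ∧ Zsqrtd.norm z.1 ≤ 2 * N ∧
      (N : ℤ) < Zsqrtd.norm z.2 ∧ Zsqrtd.norm z.2 ≤ 2 * N ∧
      Zsqrtd.re z.2 * Zsqrtd.im z.1 - Zsqrtd.re z.1 * Zsqrtd.im z.2 = D} =
      ↑{p ∈ GaussianInt.annulus N ×ˢ GaussianInt.annulus N | (p.1 * star p.2).im = D} := by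
    ext p
    simp only [Set.mem_ofPred_eq, coe_filter, mem_product, GaussianInt.mem_annulus,
      GaussianInt.im_mul_star, and_assoc]
  rw [hset, Nat.card_coe_set_eq, Set.ncard_coe_finset, pow_one]
  calc (#{p ∈ GaussianInt.annulus N ×ˢ GaussianInt.annulus N | (p.1 * star p.2).im = D} : ℝ)
      ≤ 4 * ∑ z ∈ GaussianInt.annulus N, (Int.gcd z.re z.im : ℝ) := by
        exact_mod_cast GaussianInt.card_filter_product_le_sum_gcd N D
    _ ≤ 4 * ∑ z ∈ GaussianInt.box M, (Int.gcd z.re z.im : ℝ) := by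
        gcongr
        exact GaussianInt.annulus_subset_box N
    _ ≤ 4 * (9 * M ^ 2 * (1 + Real.log M)) := by gcongr; exact GaussianInt.sum_gcd_box_le M
    _ ≤ 216 * N * Real.log N := by
        linarith [sq_mul_one_add_log_le hN (Nat.sqrt_le' (2 * N))]
end

section
/- For z_1, z_2 ∈ ℤ[i] with |z_1|^2, |z_2|^2 in (N, 2N], write Δ = Im(z_2 · conj(z_1)). Then for any Y ≥ 1, the number of pairs (z_1,z_2) with Δ ≠ 0 and gcd(z_2 − z_1, Δ) > Y (gcd as the largest positive integer dividing both z_2 − z_1 in ℤ[i] and Δ in ℤ) is at most C·Y^{−1}·N^2. -/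
open Finset

private lemma mul_self_le_mul_self_real {a b : ℝ} (ha : 0 ≤ a) (h : a ≤ b) :
    a * a ≤ b * b := mul_self_le_mul_self ha h

set_option maxHeartbeats 1000000 in
/-- The number of pairs of Gaussian integers `z₁, z₂` with `|z₁|², |z₂|² ∈ (N, 2N]`,
`Δ = Im(z₂ · conj z₁) ≠ 0`, and some integer `d > Y` dividing both `z₂ − z₁` (in `ℤ[i]`)
and `Δ` (in `ℤ`), is at most `C·Y⁻¹·N²`. -/
theorem gaussian_pairs_large_gcd_count :
    ∃ C : ℝ, 0 < C ∧ ∀ N : ℕ, 1 ≤ N → ∀ Y : ℝ, 1 ≤ Y →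
      (Nat.card {z : GaussianInt × GaussianInt |
          (N : ℤ) < Zsqrtd.norm z.1 ∧ Zsqrtd.norm z.1 ≤ 2 * N ∧
          (N : ℤ) < Zsqrtd.norm z.2 ∧ Zsqrtd.norm z.2 ≤ 2 * N ∧
          Zsqrtd.re z.2 * Zsqrtd.im z.1 - Zsqrtd.re z.1 * Zsqrtd.im z.2 ≠ 0 ∧
          ∃ d : ℕ, Y < (d : ℝ) ∧ (d : GaussianInt) ∣ (z.2 - z.1) ∧
            (d : ℤ) ∣ (Zsqrtd.re z.2 * Zsqrtd.im z.1 - Zsqrtd.re z.1 * Zsqrtd.im z.2)} : ℝ)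
        ≤ C * Y⁻¹ * (N : ℝ) ^ 2 := by
  classical
  refine ⟨2592, by norm_num, ?_⟩
  intro N hN Y hY
  set S : Set (GaussianInt × GaussianInt) := {z : GaussianInt × GaussianInt |
          (N : ℤ) < Zsqrtd.norm z.1 ∧ Zsqrtd.norm z.1 ≤ 2 * N ∧
          (N : ℤ) < Zsqrtd.norm z.2 ∧ Zsqrtd.norm z.2 ≤ 2 * N ∧
          Zsqrtd.re z.2 * Zsqrtd.im z.1 - Zsqrtd.re z.1 * Zsqrtd.im z.2 ≠ 0 ∧
          ∃ d : ℕ, Y < (d : ℝ) ∧ (d : GaussianInt) ∣ (z.2 - z.1) ∧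
            (d : ℤ) ∣ (Zsqrtd.re z.2 * Zsqrtd.im z.1 - Zsqrtd.re z.1 * Zsqrtd.im z.2)} with hS
  set m : ℕ := ⌊Y⌋₊ with hm_def
  have hm1 : 1 ≤ m := Nat.le_floor (by exact_mod_cast hY)
  set D : ℕ := Nat.sqrt (8 * N) with hD_def
  set A : ℕ := Nat.sqrt (2 * N) with hA_def
  have hA1 : 1 ≤ A := Nat.le_sqrt.mpr (by omega)
  set P : GaussianInt × GaussianInt → Prop := fun z =>
    ∃ d : ℕ, Y < (d : ℝ) ∧ (d : GaussianInt) ∣ (z.2 - z.1) ∧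
      (d : ℤ) ∣ (Zsqrtd.re z.2 * Zsqrtd.im z.1 - Zsqrtd.re z.1 * Zsqrtd.im z.2) with hP_def
  set dd : GaussianInt × GaussianInt → ℕ := fun z => if h : P z then h.choose else 0 with hdd_def
  set f : GaussianInt × GaussianInt → (_ : ℕ) × (ℤ × ℤ) × (ℤ × ℤ) := fun z =>
    ⟨dd z, (z.1.re, z.1.im), ((z.2 - z.1).re / (dd z : ℤ), (z.2 - z.1).im / (dd z : ℤ))⟩
    with hf_def
  set box : ℕ → Finset (ℤ × ℤ) := fun k =>
    Finset.Icc (-(k : ℤ)) (k : ℤ) ×ˢ Finset.Icc (-(k : ℤ)) (k : ℤ) with hbox_def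
  set F : Finset ((_ : ℕ) × (ℤ × ℤ) × (ℤ × ℤ)) :=
    (Finset.Ioc m D).sigma (fun d => box A ×ˢ box (D / d)) with hF_def
  -- basic facts about members of S
  have hfacts : ∀ z ∈ S, Y < (dd z : ℝ) ∧ 0 < dd z ∧
      ((dd z : ℤ) ∣ (z.2 - z.1).re ∧ (dd z : ℤ) ∣ (z.2 - z.1).im) ∧
      m < dd z ∧ dd z ≤ D := by
    intro z hz
    obtain ⟨h1, h2, h3, h4, h5, hP⟩ := hz
    have hPz : P z := hP
    have hdz : Y < (dd z : ℝ) ∧ (dd z : GaussianInt) ∣ (z.2 - z.1) ∧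
        (dd z : ℤ) ∣ (Zsqrtd.re z.2 * Zsqrtd.im z.1 - Zsqrtd.re z.1 * Zsqrtd.im z.2) := by
      simp only [hdd_def, dif_pos hPz]
      exact hPz.choose_spec
    obtain ⟨hYd, hdvdG, hdvdZ⟩ := hdz
    have hd0 : 0 < dd z := by
      rcases Nat.eq_zero_or_pos (dd z) with h | h
      · rw [h] at hYd; norm_num at hYd; linarith
      · exact h
    have hcomp : (dd z : ℤ) ∣ (z.2 - z.1).re ∧ (dd z : ℤ) ∣ (z.2 - z.1).im :=
      (Zsqrtd.intCast_dvd (dd z : ℤ) (z.2 - z.1)).mp (by exact_mod_cast hdvdG)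
    have hne : z.2 - z.1 ≠ 0 := by
      intro h
      apply h5
      have h' : z.2 = z.1 := sub_eq_zero.mp h
      rw [h']; ring
    have hnorm8 : Zsqrtd.norm (z.2 - z.1) ≤ 8 * (N : ℤ) := by
      have e1 : Zsqrtd.norm z.1 = z.1.re * z.1.re + z.1.im * z.1.im := by
        rw [Zsqrtd.norm_def]; ring
      have e2 : Zsqrtd.norm z.2 = z.2.re * z.2.re + z.2.im * z.2.im := by
        rw [Zsqrtd.norm_def]; ring
      have e3 : Zsqrtd.norm (z.2 - z.1) =
          (z.2.re - z.1.re) * (z.2.re - z.1.re) + (z.2.im - z.1.im) * (z.2.im - z.1.im) := by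
        rw [Zsqrtd.norm_def]; simp only [Zsqrtd.re_sub, Zsqrtd.im_sub]; ring
      rw [e3]; rw [e1] at h2; rw [e2] at h4
      nlinarith [sq_nonneg (z.2.re + z.1.re), sq_nonneg (z.2.im + z.1.im)]
    have hd2 : (dd z : ℤ) * (dd z : ℤ) ≤ Zsqrtd.norm (z.2 - z.1) := by
      have hdvdn : ((dd z : ℤ) * (dd z : ℤ)) ∣ Zsqrtd.norm (z.2 - z.1) := by
        obtain ⟨c, hc⟩ := hdvdG
        rw [hc, Zsqrtd.norm_mul]
        have e : Zsqrtd.norm ((dd z : ℕ) : GaussianInt) = (dd z : ℤ) * (dd z : ℤ) := by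
          simp [Zsqrtd.norm_def]
        rw [e]
        exact Dvd.intro _ rfl
      have hpos : 0 < Zsqrtd.norm (z.2 - z.1) := GaussianInt.norm_pos.mpr hne
      exact Int.le_of_dvd hpos hdvdn
    have hdD : dd z ≤ D := by
      rw [hD_def, Nat.le_sqrt]
      have h8 : (dd z : ℤ) * (dd z : ℤ) ≤ 8 * (N : ℤ) := le_trans hd2 hnorm8
      exact_mod_cast h8
    have hmd : m < dd z := by
      have hmY : (m : ℝ) ≤ Y := Nat.floor_le (by linarith)
      have : (m : ℝ) < (dd z : ℝ) := lt_of_le_of_lt hmY hYd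
      exact_mod_cast this
    exact ⟨hYd, hd0, hcomp, hmd, hdD⟩
  -- the map sends S into F
  have hmaps : ∀ z ∈ S, f z ∈ (F : Set ((_ : ℕ) × (ℤ × ℤ) × (ℤ × ℤ))) := by
    intro z hz
    obtain ⟨hYd, hd0, ⟨hre, him⟩, hmd, hdD⟩ := hfacts z hz
    obtain ⟨h1, h2, h3, h4, h5, hP⟩ := hz
    simp only [hF_def, Finset.coe_sigma, Set.mem_sigma_iff, Finset.mem_coe, Finset.mem_Ioc,
      hf_def]
    refine ⟨⟨hmd, hdD⟩, ?_⟩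
    rw [Finset.mem_product]
    constructor
    · -- z.1 in box A
      simp only [hbox_def, Finset.mem_product, Finset.mem_Icc]
      have hb : ∀ a b : ℤ, a * a + b * b ≤ 2 * (N : ℤ) → -(A : ℤ) ≤ a ∧ a ≤ (A : ℤ) := by
        intro a b hab
        have haa : a.natAbs * a.natAbs ≤ 2 * N := by
          have h1 : (↑(a.natAbs * a.natAbs) : ℤ) ≤ 2 * (N : ℤ) := by
            rw [Int.natAbs_mul_self]
            nlinarith [mul_self_nonneg b]
          exact_mod_cast h1
        have hA' : a.natAbs ≤ A := Nat.le_sqrt.mpr haa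
        omega
      have e1 : Zsqrtd.norm z.1 = z.1.re * z.1.re + z.1.im * z.1.im := by
        rw [Zsqrtd.norm_def]; ring
      rw [e1] at h2
      exact ⟨hb z.1.re z.1.im h2, hb z.1.im z.1.re (by linarith)⟩
    · -- quotient in box (D / dd z)
      simp only [hbox_def, Finset.mem_product, Finset.mem_Icc]
      have hnorm8 : (z.2 - z.1).re * (z.2 - z.1).re + (z.2 - z.1).im * (z.2 - z.1).im
          ≤ 8 * (N : ℤ) := by
        have e1 : Zsqrtd.norm z.1 = z.1.re * z.1.re + z.1.im * z.1.im := by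
          rw [Zsqrtd.norm_def]; ring
        have e2 : Zsqrtd.norm z.2 = z.2.re * z.2.re + z.2.im * z.2.im := by
          rw [Zsqrtd.norm_def]; ring
        rw [e1] at h2; rw [e2] at h4
        simp only [Zsqrtd.re_sub, Zsqrtd.im_sub]
        nlinarith [sq_nonneg (z.2.re + z.1.re), sq_nonneg (z.2.im + z.1.im)]
      have key : ∀ a : ℤ, (dd z : ℤ) ∣ a → a * a ≤ 8 * (N : ℤ) →
          -((D / dd z : ℕ) : ℤ) ≤ a / (dd z : ℤ) ∧ a / (dd z : ℤ) ≤ ((D / dd z : ℕ) : ℤ) := by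
        intro a hdvd ha
        obtain ⟨c, hc⟩ := hdvd
        have hdpos : (0 : ℤ) < (dd z : ℤ) := by exact_mod_cast hd0
        have hq : a / (dd z : ℤ) = c := by rw [hc]; exact Int.mul_ediv_cancel_left c (by omega)
        have hcd : c.natAbs * dd z ≤ D := by
          rw [hD_def, Nat.le_sqrt]
          have h1 : (↑(c.natAbs * dd z * (c.natAbs * dd z)) : ℤ) ≤ 8 * (N : ℤ) := by
            have e : (↑(c.natAbs * dd z * (c.natAbs * dd z)) : ℤ) = a * a := by
              push_cast
              calc |c| * (dd z : ℤ) * (|c| * (dd z : ℤ))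
                  = (|c| * |c|) * ((dd z : ℤ) * (dd z : ℤ)) := by ring
                _ = (c * c) * ((dd z : ℤ) * (dd z : ℤ)) := by rw [abs_mul_abs_self]
                _ = a * a := by rw [hc]; ring
            rw [e]; exact ha
          exact_mod_cast h1
        have hcD : c.natAbs ≤ D / dd z := by
          rw [Nat.le_div_iff_mul_le hd0]
          exact hcd
        rw [hq]
        omega
      refine ⟨key _ hre (by nlinarith [mul_self_nonneg ((z.2 - z.1).im)]),
        key _ him (by nlinarith [mul_self_nonneg ((z.2 - z.1).re)])⟩
  -- injectivity on S
  have hinj : Set.InjOn f S := by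
    intro z hz z' hz' hzz
    obtain ⟨hYd, hd0, ⟨hre, him⟩, _, _⟩ := hfacts z hz
    obtain ⟨hYd', hd0', ⟨hre', him'⟩, _, _⟩ := hfacts z' hz'
    simp only [hf_def, Sigma.mk.inj_iff, Prod.mk.injEq, heq_eq_eq] at hzz
    obtain ⟨hdeq, ⟨hre1, him1⟩, hqre, hqim⟩ := hzz
    have h1 : z.1 = z'.1 := Zsqrtd.ext hre1 him1
    have h2 : z.2 - z.1 = z'.2 - z'.1 := by
      rw [hdeq] at hre him
      apply Zsqrtd.ext
      · rw [hdeq] at hqre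
        calc (z.2 - z.1).re = (dd z' : ℤ) * ((z.2 - z.1).re / (dd z' : ℤ)) :=
              (Int.mul_ediv_cancel' hre).symm
          _ = (dd z' : ℤ) * ((z'.2 - z'.1).re / (dd z' : ℤ)) := by rw [hqre]
          _ = (z'.2 - z'.1).re := Int.mul_ediv_cancel' hre'
      · rw [hdeq] at hqim
        calc (z.2 - z.1).im = (dd z' : ℤ) * ((z.2 - z.1).im / (dd z' : ℤ)) :=
              (Int.mul_ediv_cancel' him).symm
          _ = (dd z' : ℤ) * ((z'.2 - z'.1).im / (dd z' : ℤ)) := by rw [hqim]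
          _ = (z'.2 - z'.1).im := Int.mul_ediv_cancel' him'
    have h3 : z.2 = z'.2 := by
      rw [h1] at h2
      exact sub_left_injective h2
    exact Prod.ext h1 h3
  -- cardinality bound via the injection
  have hcard : Nat.card S ≤ F.card := by
    rw [Nat.card_coe_set_eq]
    calc S.ncard ≤ (F : Set ((_ : ℕ) × (ℤ × ℤ) × (ℤ × ℤ))).ncard :=
          Set.ncard_le_ncard_of_injOn f hmaps hinj F.finite_toSet
      _ = F.card := Set.ncard_coe_finset F
  -- compute F.card
  have hboxcard : ∀ k : ℕ, (box k).card = (2 * k + 1) * (2 * k + 1) := by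
    intro k
    simp only [hbox_def, Finset.card_product, Int.card_Icc]
    have e : ((k : ℤ) + 1 - -(k : ℤ)).toNat = 2 * k + 1 := by omega
    rw [e]
  have hFcard : F.card = ∑ d ∈ Finset.Ioc m D,
      ((2 * A + 1) * (2 * A + 1)) * ((2 * (D / d) + 1) * (2 * (D / d) + 1)) := by
    rw [hF_def, Finset.card_sigma]
    refine Finset.sum_congr rfl fun d _ => ?_
    rw [Finset.card_product, hboxcard, hboxcard]
  -- now the real estimate
  have hNpos : (0 : ℝ) < (N : ℝ) := by exact_mod_cast Nat.pos_of_ne_zero (by omega)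
  have hYpos : (0 : ℝ) < Y := lt_of_lt_of_le zero_lt_one hY
  have hterm : ∀ d ∈ Finset.Ioc m D,
      ((((2 * A + 1) * (2 * A + 1)) * ((2 * (D / d) + 1) * (2 * (D / d) + 1)) : ℕ) : ℝ)
        ≤ 1296 * (N : ℝ) ^ 2 * ((d : ℝ) ^ 2)⁻¹ := by
    intro d hd
    rw [Finset.mem_Ioc] at hd
    obtain ⟨hmd, hdD⟩ := hd
    have hd1 : 1 ≤ d := le_trans hm1 (le_of_lt hmd)
    have hdpos : (0 : ℝ) < (d : ℝ) := by exact_mod_cast hd1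
    set B := D / d with hB_def
    have hB1 : 1 ≤ B := (Nat.one_le_div_iff (by omega)).mpr hdD
    have hAR : (1 : ℝ) ≤ (A : ℝ) := by exact_mod_cast hA1
    have hBR : (1 : ℝ) ≤ (B : ℝ) := by exact_mod_cast hB1
    have hAsq : ((A : ℝ)) ^ 2 ≤ 2 * (N : ℝ) := by
      have h0 := Nat.sqrt_le' (2 * N)
      have h2 : ((A ^ 2 : ℕ) : ℝ) ≤ ((2 * N : ℕ) : ℝ) := by exact_mod_cast h0
      push_cast at h2; exact h2
    have hDsq : ((D : ℝ)) ^ 2 ≤ 8 * (N : ℝ) := by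
      have h0 := Nat.sqrt_le' (8 * N)
      have h2 : ((D ^ 2 : ℕ) : ℝ) ≤ ((8 * N : ℕ) : ℝ) := by exact_mod_cast h0
      push_cast at h2; exact h2
    have hBd : (B : ℝ) * (d : ℝ) ≤ (D : ℝ) := by
      have h0 := Nat.div_mul_le_self D d
      exact_mod_cast h0
    have hBsq : ((B : ℝ)) ^ 2 * ((d : ℝ)) ^ 2 ≤ 8 * (N : ℝ) := by
      nlinarith [mul_self_le_mul_self (by positivity : (0:ℝ) ≤ (B:ℝ) * (d:ℝ)) hBd, hDsq]
    have ecast : ((((2 * A + 1) * (2 * A + 1)) * ((2 * B + 1) * (2 * B + 1)) : ℕ) : ℝ)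
        = (2 * (A : ℝ) + 1) * (2 * (A : ℝ) + 1) * ((2 * (B : ℝ) + 1) * (2 * (B : ℝ) + 1)) := by
      push_cast; ring
    rw [ecast, ← div_eq_mul_inv, le_div_iff₀ (by positivity)]
    have s1 : (2 * (A : ℝ) + 1) * (2 * (A : ℝ) + 1) ≤ 18 * (N : ℝ) := by
      have t := mul_self_le_mul_self_real (by linarith) (by linarith : 2 * (A : ℝ) + 1 ≤ 3 * A)
      nlinarith [hAsq]
    have s2 : (2 * (B : ℝ) + 1) * (2 * (B : ℝ) + 1) * ((d : ℝ)) ^ 2 ≤ 72 * (N : ℝ) := by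
      have t := mul_self_le_mul_self_real (by linarith) (by linarith : 2 * (B : ℝ) + 1 ≤ 3 * B)
      nlinarith [hBsq, sq_nonneg ((d : ℝ))]
    have s3 : ((2 * (A : ℝ) + 1) * (2 * (A : ℝ) + 1)) *
        ((2 * (B : ℝ) + 1) * (2 * (B : ℝ) + 1) * ((d : ℝ)) ^ 2) ≤ 18 * (N : ℝ) * (72 * (N : ℝ)) :=
      mul_le_mul s1 s2 (by positivity) (by linarith)
    nlinarith [s3]
  -- sum of inverse squares
  have hsum : ∑ d ∈ Finset.Ioc m D, ((d : ℝ) ^ 2)⁻¹ ≤ (m : ℝ)⁻¹ := by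
    rcases le_or_gt m D with h | h
    · calc ∑ d ∈ Finset.Ioc m D, ((d : ℝ) ^ 2)⁻¹ ≤ (m : ℝ)⁻¹ - (D : ℝ)⁻¹ :=
            sum_Ioc_inv_sq_le_sub (by omega) h
        _ ≤ (m : ℝ)⁻¹ := by
            have hD0 : (0 : ℝ) ≤ (D : ℝ)⁻¹ := by positivity
            linarith
    · rw [Finset.Ioc_eq_empty (by omega)]
      simp only [Finset.sum_empty]
      positivity
  have hmpos : (0 : ℝ) < (m : ℝ) := by exact_mod_cast hm1
  have hminv : (m : ℝ)⁻¹ ≤ 2 / Y := by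
    have hmY : Y / 2 ≤ (m : ℝ) := by
      rcases le_or_gt Y 2 with h | h
      · have h1 : (1 : ℝ) ≤ (m : ℝ) := by exact_mod_cast hm1
        linarith
      · have h1 : Y - 1 ≤ (m : ℝ) := by
          have h2 := Nat.lt_floor_add_one Y
          rw [← hm_def] at h2
          linarith
        linarith
    calc (m : ℝ)⁻¹ ≤ (Y / 2)⁻¹ := by
          apply inv_anti₀ (by linarith) hmY
      _ = 2 / Y := by rw [inv_div]
  -- put everything together
  calc (Nat.card S : ℝ) ≤ (F.card : ℝ) := by exact_mod_cast hcard
    _ = ∑ d ∈ Finset.Ioc m D,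
        ((((2 * A + 1) * (2 * A + 1)) * ((2 * (D / d) + 1) * (2 * (D / d) + 1)) : ℕ) : ℝ) := by
        rw [hFcard]; push_cast; rfl
    _ ≤ ∑ d ∈ Finset.Ioc m D, 1296 * (N : ℝ) ^ 2 * ((d : ℝ) ^ 2)⁻¹ :=
        Finset.sum_le_sum hterm
    _ = 1296 * (N : ℝ) ^ 2 * ∑ d ∈ Finset.Ioc m D, ((d : ℝ) ^ 2)⁻¹ := by
        rw [Finset.mul_sum]
    _ ≤ 1296 * (N : ℝ) ^ 2 * (m : ℝ)⁻¹ := by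
        apply mul_le_mul_of_nonneg_left hsum (by positivity)
    _ ≤ 1296 * (N : ℝ) ^ 2 * (2 / Y) := by
        apply mul_le_mul_of_nonneg_left hminv (by positivity)
    _ = 2592 * Y⁻¹ * (N : ℝ) ^ 2 := by
        field_simp
        ring
end
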